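/- arXiv:1602.08673 — 7 statements merged into one kernel-verified Lean document; each statement's English description precedes it below -/
import Mathlib

section
/- Let A_0, …, A_n be m×m complex matrices with A_n invertible, and let w_0, …, w_n be complex numbers. If det(A_n w_n + A_{n−1} w_{n−1} + ⋯ + A_1 w_1 + A_0 w_0) = 0, then ‖A_n^{-1}‖^{-1} · |w_n| ≤ ‖A_{n−1}‖·|w_{n−1}| + ⋯ + ‖A_1‖·|w_1| + ‖A_0‖·|w_0|, where ‖·‖ denotes the L∞ operator norm on m×m complex matrices (the maximum absolute row-sum norm, i.e., the operator norm induced by the sup norm on ℂ^m). -/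
/-!
In a Banach algebra, `u + t` is still a unit whenever `‖t‖ < ‖u⁻¹‖⁻¹` (Neumann series).
With `B = ∑_{j<n} w j • A j`, the singular matrix `w n • A n + B` equals
`w n • (A n + (w n)⁻¹ • B)`, so `‖(A n)⁻¹‖⁻¹ ≤ ‖B‖ / |w n|`, and `‖B‖` is bounded by the
triangle inequality.
-/

attribute [local instance] Matrix.linftyOpNormedRing

attribute [local instance] Matrix.linftyOpNormedAlgebra

theorem Units.norm_inv_inv_le_norm_of_not_isUnit_add {R : Type*} [NormedRing R] [CompleteSpace R]
    (u : Rˣ) {t : R} (h : ¬IsUnit (↑u + t)) : ‖(↑u⁻¹ : R)‖⁻¹ ≤ ‖t‖ := by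
  by_contra! ht
  exact h (u.add t ht).isUnit

theorem Units.norm_inv_inv_mul_norm_le_of_not_isUnit_smul_add {𝕜 R : Type*}
    [NormedField 𝕜] [NormedRing R] [NormedAlgebra 𝕜 R] [CompleteSpace R]
    (u : Rˣ) (c : 𝕜) {t : R} (h : ¬IsUnit (c • (u : R) + t)) :
    ‖(↑u⁻¹ : R)‖⁻¹ * ‖c‖ ≤ ‖t‖ := by
  rcases eq_or_ne c 0 with rfl | hc
  · simp
  have hpert : ¬IsUnit (↑u + c⁻¹ • t) := by
    contrapose! h
    rw [← smul_inv_smul₀ hc t, ← smul_add]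
    exact h.smul (Units.mk0 c hc)
  calc ‖(↑u⁻¹ : R)‖⁻¹ * ‖c‖ ≤ ‖c⁻¹ • t‖ * ‖c‖ := by
        gcongr; exact u.norm_inv_inv_le_norm_of_not_isUnit_add hpert
    _ = ‖t‖ := by
        rw [norm_smul, norm_inv, mul_right_comm, inv_mul_cancel₀ (norm_ne_zero_iff.mpr hc), one_mul]

/-- If `A n` is invertible and `det (∑ j ≤ n, w j • A j) = 0`, then
`‖(A n)⁻¹‖⁻¹ * |w n| ≤ ∑_{j<n} ‖A j‖ * |w j|` in the L∞ operator norm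
(maximum absolute row-sum norm). -/
theorem det_eq_zero_norm_ineq (m n : ℕ) (A : ℕ → Matrix (Fin m) (Fin m) ℂ)
    (hAn : IsUnit (A n)) (w : ℕ → ℂ)
    (h : (∑ j ∈ Finset.range (n + 1), w j • A j).det = 0) :
    ‖(A n)⁻¹‖⁻¹ * ‖w n‖ ≤
      ∑ j ∈ Finset.range n, ‖A j‖ * ‖w j‖ := by
  have hsing : ¬IsUnit (w n • (hAn.unit : Matrix (Fin m) (Fin m) ℂ) +
      ∑ j ∈ Finset.range n, w j • A j) := by
    rw [Matrix.isUnit_iff_isUnit_det, hAn.unit_spec, add_comm, ← Finset.sum_range_succ, h]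
    exact not_isUnit_zero
  calc ‖(A n)⁻¹‖⁻¹ * ‖w n‖ = ‖(↑hAn.unit⁻¹ : Matrix (Fin m) (Fin m) ℂ)‖⁻¹ * ‖w n‖ := by
        rw [Matrix.coe_units_inv, hAn.unit_spec]
    _ ≤ ‖∑ j ∈ Finset.range n, w j • A j‖ :=
        hAn.unit.norm_inv_inv_mul_norm_le_of_not_isUnit_smul_add _ hsing
    _ ≤ ∑ j ∈ Finset.range n, ‖A j‖ * ‖w j‖ :=
        (norm_sum_le _ _).trans_eq (by simp only [norm_smul, mul_comm])
end

section
/- Let P(z) = A_n z^n + A_{n−1} z^{n−1} + ⋯ + A_1 z + A_0 be a matrix polynomial with m×m complex matrix coefficients, where n ≥ 1, A_n is invertible, and not all of A_0, …, A_{n−1} are zero. Let ρ be the unique positive root of ‖A_n^{-1}‖^{-1} x^n − ‖A_{n−1}‖ x^{n−1} − ⋯ − ‖A_1‖ x − ‖A_0‖ = 0, where ‖·‖ denotes the L∞ operator norm on m×m complex matrices (the maximum absolute row-sum norm, i.e., the operator norm induced by the sup norm on ℂ^m). Then every eigenvalue z of P, i.e., every complex z with det P(z) = 0, satisfies |z|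 ≤ ρ. -/
/-!
Write `P(z) = z ^ n • (A n + (z ^ n)⁻¹ • S(z))` with `S(z) = ∑_{j<n} z ^ j • A j`. In a Banach
algebra, `a + t` is a unit as soon as `a` is one and `‖a⁻¹‖ * ‖t‖ < 1` (Neumann series), so `P(z)`
is invertible once `‖(A n)⁻¹‖ * ∑_{j<n} ‖A j‖ * ‖z‖ ^ j < ‖z‖ ^ n`. Dividing by `‖z‖ ^ n`, the
left-hand side becomes `‖(A n)⁻¹‖ * ∑_{j<n} ‖A j‖ * ‖z‖ ^ (j - n)`, which decreases strictly in
`‖z‖` and is at most `1` at the Cauchy radius `ρ`; hence it is `< 1` whenever `ρ < ‖z‖`.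
-/

attribute [local instance] Matrix.linftyOpNormedRing
attribute [local instance] Matrix.linftyOpNormedAlgebra

open Finset

lemma pow_mul_pow_succ_le_of_le {ρ x : ℝ} (hρ : 0 ≤ ρ) (hρx : ρ ≤ x) {j k : ℕ} (hjk : j ≤ k) :
    x ^ j * ρ ^ (k + 1) ≤ ρ ^ (j + 1) * x ^ k := by
  obtain ⟨d, rfl⟩ := Nat.exists_eq_add_of_le hjk
  have hx : 0 ≤ x := hρ.trans hρx
  calc x ^ j * ρ ^ (j + d + 1) = ρ ^ (j + 1) * (x ^ j * ρ ^ d) := by ring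
    _ ≤ ρ ^ (j + 1) * (x ^ j * x ^ d) := by gcongr
    _ = ρ ^ (j + 1) * x ^ (j + d) := by ring

lemma mul_sum_mul_pow_lt_pow_of_lt {b ρ x : ℝ} {a : ℕ → ℝ} {n : ℕ} (hb : 0 ≤ b)
    (ha : ∀ j, 0 ≤ a j) (hρ : 0 < ρ) (hρx : ρ < x)
    (hρeq : b⁻¹ * ρ ^ n = ∑ j ∈ range n, a j * ρ ^ j) :
    b * ∑ j ∈ range n, a j * x ^ j < x ^ n := by
  cases n with
  | zero => simp
  | succ k =>
    have hx : 0 < x := hρ.trans hρx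
    refine lt_of_mul_lt_mul_right ?_ (pow_nonneg hρ.le (k + 1))
    calc (b * ∑ j ∈ range (k + 1), a j * x ^ j) * ρ ^ (k + 1)
        = b * ∑ j ∈ range (k + 1), a j * (x ^ j * ρ ^ (k + 1)) := by
          simp only [mul_assoc, sum_mul]
      _ ≤ b * ∑ j ∈ range (k + 1), a j * (ρ ^ (j + 1) * x ^ k) := by
          refine mul_le_mul_of_nonneg_left (sum_le_sum fun j hj => ?_) hb
          exact mul_le_mul_of_nonneg_left
            (pow_mul_pow_succ_le_of_le hρ.le hρx.le (Nat.lt_succ_iff.mp (mem_range.mp hj))) (ha j)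
      _ = b * b⁻¹ * ρ ^ (k + 1) * (ρ * x ^ k) := by
          rw [mul_assoc b b⁻¹, hρeq, mul_assoc, sum_mul]
          congr 1
          refine sum_congr rfl fun j _ => ?_
          ring
      _ ≤ 1 * ρ ^ (k + 1) * (ρ * x ^ k) := by
          -- only `≤`: `b * b⁻¹ = 0` when `b = 0`
          gcongr
          exact mul_inv_le_one
      _ < x ^ (k + 1) * ρ ^ (k + 1) := by
          rw [one_mul, pow_succ' x k, mul_comm]
          gcongr

section BanachAlgebra

variable {𝕜 R : Type*} [NormedField 𝕜] [NormedRing R] [NormedAlgebra 𝕜 R]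
  [HasSummableGeomSeries R]

theorem IsUnit.add_of_norm_inverse_mul_lt_one {a t : R} (ha : IsUnit a)
    (h : ‖Ring.inverse a‖ * ‖t‖ < 1) : IsUnit (a + t) := by
  have hfac : a + t = a * (1 - -(Ring.inverse a * t)) := by
    rw [sub_neg_eq_add, mul_add, mul_one, ← mul_assoc, Ring.mul_inverse_cancel a ha, one_mul]
  rw [hfac]
  refine ha.mul (isUnit_one_sub_of_norm_lt_one ?_)
  rw [norm_neg]
  exact (norm_mul_le _ _).trans_lt h

omit [HasSummableGeomSeries R] in
lemma norm_sum_pow_smul_le (A : ℕ → R) (n : ℕ) (z : 𝕜) :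
    ‖∑ j ∈ range n, z ^ j • A j‖ ≤ ∑ j ∈ range n, ‖A j‖ * ‖z‖ ^ j := by
  refine (norm_sum_le _ _).trans (sum_le_sum fun j _ => ?_)
  rw [norm_smul, norm_pow, mul_comm]

theorem isUnit_sum_pow_smul_of_norm_inverse_mul_lt {A : ℕ → R} {n : ℕ} (hA : IsUnit (A n))
    {z : 𝕜} (h : ‖Ring.inverse (A n)‖ * ∑ j ∈ range n, ‖A j‖ * ‖z‖ ^ j < ‖z‖ ^ n) :
    IsUnit (∑ j ∈ range (n + 1), z ^ j • A j) := by
  have hzn : z ^ n ≠ 0 := by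
    intro h0
    rw [← norm_pow, h0, norm_zero] at h
    exact h.not_ge (by positivity)
  have hzn_pos : 0 < ‖z‖ ^ n := by rw [← norm_pow]; exact norm_pos_iff.mpr hzn
  set S := ∑ j ∈ range n, z ^ j • A j
  have hfac : ∑ j ∈ range (n + 1), z ^ j • A j = z ^ n • (A n + (z ^ n)⁻¹ • S) := by
    rw [sum_range_succ, smul_add, smul_inv_smul₀ hzn, add_comm]
  rw [hfac, Algebra.smul_def]
  refine ((isUnit_iff_ne_zero.mpr hzn).map (algebraMap 𝕜 R)).mul
    (hA.add_of_norm_inverse_mul_lt_one ?_)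
  calc ‖Ring.inverse (A n)‖ * ‖(z ^ n)⁻¹ • S‖
      ≤ ‖Ring.inverse (A n)‖ * ((∑ j ∈ range n, ‖A j‖ * ‖z‖ ^ j) / ‖z‖ ^ n) := by
        rw [norm_smul, norm_inv, norm_pow, inv_mul_eq_div]
        gcongr
        exact norm_sum_pow_smul_le A n z
    _ < 1 := by rwa [← mul_div_assoc, div_lt_one hzn_pos]

end BanachAlgebra

theorem cauchy_bound_matrix_polynomial_general (m n : ℕ)
    (A : ℕ → Matrix (Fin m) (Fin m) ℂ) (hAn : IsUnit (A n))
    (ρ : ℝ) (hρ : 0 < ρ)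
    (hρeq : ‖(A n)⁻¹‖⁻¹ * ρ ^ n = ∑ j ∈ Finset.range n, ‖A j‖ * ρ ^ j)
    (z : ℂ) (hz : (∑ j ∈ Finset.range (n + 1), z ^ j • A j).det = 0) :
    ‖z‖ ≤ ρ := by
  by_contra! hρz
  have hP : IsUnit (∑ j ∈ Finset.range (n + 1), z ^ j • A j) := by
    refine isUnit_sum_pow_smul_of_norm_inverse_mul_lt hAn ?_
    rw [← Matrix.nonsing_inv_eq_ringInverse]
    exact mul_sum_mul_pow_lt_pow_of_lt (norm_nonneg _) (fun _ => norm_nonneg _) hρ hρz hρeq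
  exact ((Matrix.isUnit_iff_isUnit_det _).mp hP).ne_zero hz

/-- Cauchy's bound for matrix polynomials: if `A n` is invertible, not all of
`A 0, …, A (n-1)` are zero, and `ρ > 0` is the (unique) positive root of
`‖(A n)⁻¹‖⁻¹ x^n = ∑_{j<n} ‖A j‖ x^j` (L∞ operator norm), then every
eigenvalue `z` of `P(z) = ∑_{j≤n} A j z^j`, i.e. every `z` with
`det P(z) = 0`, satisfies `|z| ≤ ρ`. -/
theorem cauchy_bound_matrix_polynomial (m n : ℕ) (hn : 1 ≤ n)
    (A : ℕ → Matrix (Fin m) (Fin m) ℂ) (hAn : IsUnit (A n))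
    (hne : ∃ j < n, A j ≠ 0) (ρ : ℝ) (hρ : 0 < ρ)
    (hρeq : ‖(A n)⁻¹‖⁻¹ * ρ ^ n = ∑ j ∈ Finset.range n, ‖A j‖ * ρ ^ j)
    (z : ℂ) (hz : (∑ j ∈ Finset.range (n + 1), z ^ j • A j).det = 0) :
    ‖z‖ ≤ ρ :=
  cauchy_bound_matrix_polynomial_general m n A hAn ρ hρ hρeq z hz
end

section
/- Let n ≥ 1 and for each j = 0, 1, …, n let q_j be a complex polynomial of degree exactly j. For each j with 1 ≤ j ≤ n let r_{1j}, …, r_{jj} denote the roots of q_j listed with multiplicity, and suppose there exist a constant γ > 0 and, for each such j, nonnegative reals α_1^{(j)}, …, α_j^{(j)} with α_1^{(j)} + ⋯ + α_j^{(j)} ≤ γ, such that for every complex z that is not a root of q_j, |q_{j−1}(z)/q_j(z)| ≤ Σ_{i=1}^{j} α_i^{(j)}/|z − r_{ij}|. Let A_0, …, A_n be m×m complex matrices with A_n invertible, and let z be a complex number with det(A_n q_n(z) + A_{n−1} q_{n−1}(z) + ⋯ + A_0 q_0(z)) = 0. Set d = min over 1 ≤ k ≤ n and over roots r of q_k of |z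 − r|. Then ‖A_n^{-1}‖^{-1} (d/γ)^n ≤ Σ_{j=0}^{n−1} ‖A_j‖ (d/γ)^j, where ‖·‖ denotes the L∞ operator norm on m×m complex matrices (the maximum absolute row-sum norm, i.e., the operator norm induced by the sup norm on ℂ^m). In particular, z lies in the union over 1 ≤ k ≤ n and over roots r of q_k of the closed disks {w : |w − r| ≤ γρ}, where ρ is any positive number with ‖A_n^{-1}‖^{-1} ρ^n = Σ_{j=0}^{n−1} ‖A_j‖ ρ^j. -/
/-!
Write the pencil at `z` as `q n (z) • A n + ∑_{j<n} q j (z) • A j`. In a Banach algebra a unit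
`u` stays a unit under perturbations of norm `< ‖u⁻¹‖⁻¹`, so singularity forces
`‖(A n)⁻¹‖⁻¹ |q n (z)| ≤ ∑_{j<n} ‖A j‖ |q j (z)|`. The ratio condition, with every root at
distance `≥ d` from `z`, gives `(d/γ) |q (j-1) (z)| ≤ |q j (z)|`; chaining these,
`(d/γ)^n |q j (z)| ≤ (d/γ)^j |q n (z)|`, which turns the previous inequality into the one in
`d/γ`. Finally `‖(A n)⁻¹‖⁻¹ tⁿ - ∑_{j<n} ‖A j‖ tʲ` is positive beyond its positive root `ρ`,
so `d/γ ≤ ρ`.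
-/

attribute [local instance] Matrix.linftyOpNormedRing

attribute [local instance] Matrix.linftyOpNormedAlgebra

open Finset Polynomial

section NonunitPerturbation

variable {𝕜 R : Type*} [NormedField 𝕜] [NormedRing R] [NormedAlgebra 𝕜 R]
  [HasSummableGeomSeries R]

theorem Units.norm_inv_inv_le_of_not_isUnit_add (u : Rˣ) {t : R}
    (h : ¬IsUnit ((u : R) + t)) : ‖(↑u⁻¹ : R)‖⁻¹ ≤ ‖t‖ :=
  not_lt.1 fun ht => h (u.add t ht).isUnit

theorem Units.norm_inv_inv_mul_le_of_not_isUnit_smul_add (u : Rˣ) {c : 𝕜} (hc : c ≠ 0)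
    {t : R} (h : ¬IsUnit (c • (u : R) + t)) : ‖(↑u⁻¹ : R)‖⁻¹ * ‖c‖ ≤ ‖t‖ := by
  have hrescaled : ¬IsUnit ((u : R) + c⁻¹ • t) := by
    rwa [← isUnit_smul_iff (Units.mk0 c hc), Units.smul_def, Units.val_mk0, smul_add,
      smul_inv_smul₀ hc]
  have := u.norm_inv_inv_le_of_not_isUnit_add hrescaled
  rwa [norm_smul, norm_inv, le_inv_mul_iff₀ (norm_pos_iff.2 hc), mul_comm] at this

theorem norm_inverse_inv_mul_le_sum_of_not_isUnit_sum {A : ℕ → R} {c : ℕ → 𝕜} {n : ℕ}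
    (hA : IsUnit (A n)) (hc : c n ≠ 0) (h : ¬IsUnit (∑ j ∈ range (n + 1), c j • A j)) :
    ‖Ring.inverse (A n)‖⁻¹ * ‖c n‖ ≤ ∑ j ∈ range n, ‖A j‖ * ‖c j‖ := by
  rw [sum_range_succ, add_comm, ← hA.unit_spec] at h
  calc ‖Ring.inverse (A n)‖⁻¹ * ‖c n‖ ≤ ‖∑ j ∈ range n, c j • A j‖ := by
        rw [← hA.unit_spec, Ring.inverse_unit]
        exact hA.unit.norm_inv_inv_mul_le_of_not_isUnit_smul_add hc h
    _ ≤ ∑ j ∈ range n, ‖A j‖ * ‖c j‖ := by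
        refine (norm_sum_le _ _).trans (sum_le_sum fun j _ => ?_)
        rw [norm_smul, mul_comm]

end NonunitPerturbation

theorem pow_mul_le_pow_mul_of_chain {a : ℕ → ℝ} {x : ℝ} (hx : 0 ≤ x) {n : ℕ}
    (hchain : ∀ j < n, x * a j ≤ a (j + 1)) {j : ℕ} (hj : j ≤ n) :
    x ^ n * a j ≤ x ^ j * a n := by
  induction n, hj using Nat.le_induction with
  | base => rfl
  | succ n hjn ih =>
    calc x ^ (n + 1) * a j = x * (x ^ n * a j) := by ring
      _ ≤ x * (x ^ j * a n) :=
          mul_le_mul_of_nonneg_left (ih fun i hi => hchain i (by omega)) hx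
      _ = x ^ j * (x * a n) := by ring
      _ ≤ x ^ j * a (n + 1) := mul_le_mul_of_nonneg_left (hchain n (by omega)) (by positivity)

theorem mul_pow_le_sum_of_chain {a b : ℕ → ℝ} {K x : ℝ} {n : ℕ} (hx : 0 ≤ x)
    (hb : ∀ j, 0 ≤ b j) (ha : 0 < a n) (hchain : ∀ j < n, x * a j ≤ a (j + 1))
    (h : K * a n ≤ ∑ j ∈ range n, b j * a j) :
    K * x ^ n ≤ ∑ j ∈ range n, b j * x ^ j := by
  refine le_of_mul_le_mul_right ?_ ha
  calc K * x ^ n * a n = x ^ n * (K * a n) := by ring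
    _ ≤ x ^ n * ∑ j ∈ range n, b j * a j := by gcongr
    _ = ∑ j ∈ range n, b j * (x ^ n * a j) := by
        rw [mul_sum]; exact sum_congr rfl fun j _ => by ring
    _ ≤ ∑ j ∈ range n, b j * (x ^ j * a n) := sum_le_sum fun j hj =>
        mul_le_mul_of_nonneg_left (pow_mul_le_pow_mul_of_chain hx hchain (mem_range.1 hj).le)
          (hb j)
    _ = (∑ j ∈ range n, b j * x ^ j) * a n := by
        rw [sum_mul]; exact sum_congr rfl fun j _ => by ring

theorem le_of_mul_pow_le_sum {a : ℕ → ℝ} (ha : ∀ j, 0 ≤ a j) {K ρ x : ℝ} {n : ℕ}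
    (hK : 0 < K) (hρ : 0 < ρ) (hρeq : K * ρ ^ n = ∑ j ∈ range n, a j * ρ ^ j)
    (hx : K * x ^ n ≤ ∑ j ∈ range n, a j * x ^ j) : x ≤ ρ := by
  by_contra! hρx
  set t := x / ρ
  have ht : 1 < t := (one_lt_div hρ).2 hρx
  have hn : n ≠ 0 := by
    rintro rfl
    simp only [pow_zero, mul_one, range_zero, sum_empty] at hρeq
    exact hK.ne' hρeq
  have hpow : ∀ k, x ^ k = ρ ^ k * t ^ k := fun k => by
    rw [← mul_pow, mul_div_cancel₀ _ hρ.ne']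
  have : K * ρ ^ n * t ^ n ≤ K * ρ ^ n * t ^ (n - 1) := calc
    K * ρ ^ n * t ^ n = K * x ^ n := by rw [hpow]; ring
    _ ≤ ∑ j ∈ range n, a j * x ^ j := hx
    _ ≤ ∑ j ∈ range n, a j * ρ ^ j * t ^ (n - 1) := by
        refine sum_le_sum fun j hj => ?_
        rw [hpow, ← mul_assoc]
        have := mem_range.1 hj
        have := ha j
        gcongr
        · exact ht.le
        · omega
    _ = K * ρ ^ n * t ^ (n - 1) := by rw [← sum_mul, hρeq]
  exact (pow_lt_pow_right₀ ht (by omega)).not_ge (le_of_mul_le_mul_left this (by positivity))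

theorem div_mul_norm_le_of_norm_div_le_sum {ι : Type*} [Fintype ι] {a b w : ℂ} {r : ι → ℂ}
    {α : ι → ℝ} {γ d : ℝ} (hγ : 0 < γ) (hd : 0 < d) (hb : b ≠ 0) (hα : ∀ i, 0 ≤ α i)
    (hαγ : ∑ i, α i ≤ γ) (hdist : ∀ i, d ≤ ‖w - r i‖)
    (h : ‖a / b‖ ≤ ∑ i, α i / ‖w - r i‖) : d / γ * ‖a‖ ≤ ‖b‖ := by
  have hγd : ‖a‖ / ‖b‖ ≤ γ / d := calc
    ‖a‖ / ‖b‖ = ‖a / b‖ := (norm_div a b).symm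
    _ ≤ ∑ i, α i / ‖w - r i‖ := h
    _ ≤ ∑ i, α i / d := sum_le_sum fun i _ => div_le_div_of_nonneg_left (hα i) hd (hdist i)
    _ = (∑ i, α i) / d := (sum_div _ _ _).symm
    _ ≤ γ / d := div_le_div_of_nonneg_right hαγ hd.le
  rw [div_le_div_iff₀ (norm_pos_iff.2 hb) hd] at hγd
  rw [div_mul_eq_mul_div, div_le_iff₀ hγ]
  linarith

theorem main_inclusion_general (n : ℕ) (q : ℕ → Polynomial ℂ)
    (hdeg : ∀ j ≤ n, (q j).degree = j) (γ : ℝ) (hγ : 0 < γ)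
    (hbasis : ∀ j, 1 ≤ j → j ≤ n →
      ∃ (r : Fin j → ℂ) (α : Fin j → ℝ),
        (q j).roots = Multiset.map r Finset.univ.val ∧
        (∀ i, 0 ≤ α i) ∧ (∑ i, α i) ≤ γ ∧
        ∀ w : ℂ, (q j).eval w ≠ 0 →
          ‖(q (j - 1)).eval w / (q j).eval w‖ ≤
            ∑ i, α i / ‖w - r i‖)
    (m : ℕ) (A : ℕ → Matrix (Fin m) (Fin m) ℂ) (hAn : IsUnit (A n))
    (z : ℂ)
    (hz : (∑ j ∈ Finset.range (n + 1), (q j).eval z • A j).det = 0)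
    (d : ℝ)
    (hd : IsLeast {x : ℝ | ∃ k, 1 ≤ k ∧ k ≤ n ∧
      ∃ rt ∈ (q k).roots, x = ‖z - rt‖} d) :
    ‖(A n)⁻¹‖⁻¹ * (d / γ) ^ n ≤ ∑ j ∈ Finset.range n, ‖A j‖ * (d / γ) ^ j ∧
    ∀ ρ : ℝ, 0 < ρ →
      ‖(A n)⁻¹‖⁻¹ * ρ ^ n = ∑ j ∈ Finset.range n, ‖A j‖ * ρ ^ j →
      ∃ k, 1 ≤ k ∧ k ≤ n ∧ ∃ rt ∈ (q k).roots,
        ‖z - rt‖ ≤ γ * ρ := by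
  obtain ⟨k₀, hk₀, hk₀n, rt₀, hrt₀, hd₀⟩ := hd.1
  have hP : ¬IsUnit (∑ j ∈ range (n + 1), (q j).eval z • A j) := by
    simp [Matrix.isUnit_iff_isUnit_det, hz]
  have : Nontrivial (Matrix (Fin m) (Fin m) ℂ) :=
    not_subsingleton_iff_nontrivial.1 fun _ => hP (isUnit_of_subsingleton _)
  rw [Matrix.nonsing_inv_eq_ringInverse]
  have key : ‖Ring.inverse (A n)‖⁻¹ * (d / γ) ^ n ≤ ∑ j ∈ range n, ‖A j‖ * (d / γ) ^ j := by
    rcases (hd₀ ▸ norm_nonneg _ : 0 ≤ d).eq_or_lt with rfl | hdpos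
    · rw [zero_div, zero_pow (by omega), mul_zero]
      exact sum_nonneg fun j _ => by positivity
    have hroot : ∀ k, 1 ≤ k → k ≤ n → ∀ rt ∈ (q k).roots, d ≤ ‖z - rt‖ :=
      fun k hk hkn rt hrt => hd.2 ⟨k, hk, hkn, rt, hrt, rfl⟩
    have heval : ∀ k, 1 ≤ k → k ≤ n → (q k).eval z ≠ 0 := fun k hk hkn hzero => by
      have hqk : q k ≠ 0 := fun h => by simpa [h] using hdeg k hkn
      simpa [hdpos.not_ge] using hroot k hk hkn z ((mem_roots hqk).2 hzero)
    have hstep : ∀ j < n, d / γ * ‖(q j).eval z‖ ≤ ‖(q (j + 1)).eval z‖ := fun j hj => by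
      obtain ⟨r, α, hroots, hα, hαγ, hratio⟩ := hbasis (j + 1) j.succ_pos hj
      exact div_mul_norm_le_of_norm_div_le_sum hγ hdpos (heval _ j.succ_pos hj) hα hαγ
        (fun i => hroot _ j.succ_pos hj _ (hroots ▸ Multiset.mem_map_of_mem r (mem_univ_val i)))
        (hratio z (heval _ j.succ_pos hj))
    have hqn := heval n (by omega) le_rfl
    exact mul_pow_le_sum_of_chain (a := fun j => ‖(q j).eval z‖) (by positivity)
      (fun _ => norm_nonneg _) (norm_pos_iff.2 hqn) hstep
      (norm_inverse_inv_mul_le_sum_of_not_isUnit_sum hAn hqn hP)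
  refine ⟨key, fun ρ hρ hρeq => ⟨k₀, hk₀, hk₀n, rt₀, hrt₀, ?_⟩⟩
  have hK : 0 < ‖Ring.inverse (A n)‖⁻¹ := by
    rw [← hAn.unit_spec, Ring.inverse_unit]
    exact inv_pos.2 (Units.norm_pos _)
  rw [← hd₀, ← div_le_iff₀' hγ]
  exact le_of_mul_pow_le_sum (fun j => norm_nonneg _) hK hρ hρeq key

/-- Inclusion part of the main theorem: under the ratio condition on the
basis `q 0, …, q n`, any eigenvalue `z` of `P(z) = ∑_{j≤n} A j • q j (z)`
(i.e. `det P(z) = 0`, with `A n` invertible) satisfies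
`‖(A n)⁻¹‖⁻¹ (d/γ)^n ≤ ∑_{j<n} ‖A j‖ (d/γ)^j`, where `d` is the distance
from `z` to the set of roots of `q 1, …, q n`.  In particular `z` lies in
the union of the closed disks of radius `γρ` about those roots, where `ρ`
is any positive root of `‖(A n)⁻¹‖⁻¹ ρ^n = ∑_{j<n} ‖A j‖ ρ^j`. -/
theorem main_inclusion (n : ℕ) (hn : 1 ≤ n) (q : ℕ → Polynomial ℂ)
    (hdeg : ∀ j ≤ n, (q j).degree = j) (γ : ℝ) (hγ : 0 < γ)
    (hbasis : ∀ j, 1 ≤ j → j ≤ n →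
      ∃ (r : Fin j → ℂ) (α : Fin j → ℝ),
        (q j).roots = Multiset.map r Finset.univ.val ∧
        (∀ i, 0 ≤ α i) ∧ (∑ i, α i) ≤ γ ∧
        ∀ w : ℂ, (q j).eval w ≠ 0 →
          ‖(q (j - 1)).eval w / (q j).eval w‖ ≤
            ∑ i, α i / ‖w - r i‖)
    (m : ℕ) (A : ℕ → Matrix (Fin m) (Fin m) ℂ) (hAn : IsUnit (A n))
    (z : ℂ)
    (hz : (∑ j ∈ Finset.range (n + 1), (q j).eval z • A j).det = 0)
    (d : ℝ)
    (hd : IsLeast {x : ℝ | ∃ k, 1 ≤ k ∧ k ≤ n ∧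
      ∃ rt ∈ (q k).roots, x = ‖z - rt‖} d) :
    ‖(A n)⁻¹‖⁻¹ * (d / γ) ^ n ≤ ∑ j ∈ Finset.range n, ‖A j‖ * (d / γ) ^ j ∧
    ∀ ρ : ℝ, 0 < ρ →
      ‖(A n)⁻¹‖⁻¹ * ρ ^ n = ∑ j ∈ Finset.range n, ‖A j‖ * ρ ^ j →
      ∃ k, 1 ≤ k ∧ k ≤ n ∧ ∃ rt ∈ (q k).roots,
        ‖z - rt‖ ≤ γ * ρ :=
  main_inclusion_general n q hdeg γ hγ hbasis m A hAn z hz d hd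
end

section
/- Let n ≥ 1 and let q_0, …, q_n, r_{ij}, α_i^{(j)}, γ be as in the main inclusion theorem: q_j is a complex polynomial of degree exactly j, with roots r_{1j}, …, r_{jj} counted with multiplicity, γ > 0, the α_i^{(j)} ≥ 0 satisfy Σ_{i=1}^j α_i^{(j)} ≤ γ, and |q_{j−1}(z)/q_j(z)| ≤ Σ_{i=1}^{j} α_i^{(j)}/|z − r_{ij}| for all z not a root of q_j. Let A_0, …, A_n be m×m complex matrices with A_n invertible, let ρ > 0 satisfy ‖A_n^{-1}‖^{-1} ρ^n = Σ_{j=0}^{n−1} ‖A_j‖ ρ^j in the L∞ operator norm, and let R be the union of the closed disks of radius γρ centered at the roots of q_1, …, q_n. Suppose R is the disjoint union of two nonempty closed sets R_1 and R_2, each a union of some of these disks, with R_1 ∩ R_2 = ∅. Then the number of zeros of det P in R_1 counted with multiplicity, where P(z) = Σ_{j=0}^n A_j q_j(z), equals m times the number of zeros of q_n in R_1 counted with multiplicity. -/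
attribute [local instance] Matrix.linftyOpNormedRing
attribute [local instance] Classical.propDecidable

/-!
Deform `P` through `P_t = q_n A_n + t ∑_{j<n} q_j A_j`, `0 ≤ t ≤ 1`. Off `R` the ratio condition
gives `‖q_{j-1}(z)‖ ρ < ‖q_j(z)‖`, hence `∑_{j<n} ‖A_j‖ ‖q_j(z)‖ < ‖A_n⁻¹‖⁻¹ ‖q_n(z)‖` by the
equation defining `ρ`; so `P_t(z)` is a small perturbation of the invertible `q_n(z) A_n`, and
every zero of `det P_t` lies in `R = R₁ ∪ R₂`. As `det P_t` keeps degree `mn` and its coefficients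
depend continuously on `t`, its zeros move continuously and cannot cross between the separated
compact sets `R₁` and `R₂`. Hence `det P_1 = det P` has as many zeros in `R₁` as
`det P_0 = det A_n · q_n^m`.
-/

open Polynomial Filter Topology

attribute [local instance] Matrix.linftyOpNormedAlgebra

section ContinuousCoeff

variable {T R : Type*} [TopologicalSpace T] [TopologicalSpace R]

theorem Polynomial.continuous_coeff_mul [Semiring R] [IsTopologicalSemiring R] {f g : T → R[X]}
    (hf : ∀ k, Continuous fun t => (f t).coeff k) (hg : ∀ k, Continuous fun t => (g t).coeff k)
    (k : ℕ) : Continuous fun t => (f t * g t).coeff k := by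
  simp only [coeff_mul]
  exact continuous_finsetSum _ fun x _ => (hf x.1).mul (hg x.2)

theorem Polynomial.continuous_coeff_prod [CommSemiring R] [IsTopologicalSemiring R] {ι : Type*}
    (s : Finset ι) {f : T → ι → R[X]} (hf : ∀ i k, Continuous fun t => (f t i).coeff k) (k : ℕ) :
    Continuous fun t => (∏ i ∈ s, f t i).coeff k := by
  classical
  induction s using Finset.induction_on generalizing k with
  | empty => simpa only [Finset.prod_empty] using continuous_const
  | insert a s ha ih =>
    simp only [Finset.prod_insert ha]
    exact continuous_coeff_mul (hf a) ih k

theorem Matrix.continuous_coeff_det [CommRing R] [IsTopologicalRing R] {ι : Type*} [Fintype ι]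
    [DecidableEq ι] {M : T → Matrix ι ι R[X]} (hM : ∀ i j k, Continuous fun t => (M t i j).coeff k)
    (k : ℕ) : Continuous fun t => (M t).det.coeff k := by
  simp only [Matrix.det_apply, finsetSum_coeff, coeff_smul]
  exact continuous_finsetSum _ fun σ _ =>
    (continuous_coeff_prod _ (fun i => hM (σ i) i) k).const_smul _

end ContinuousCoeff

theorem Multiset.exists_eq_map_univ {α : Type*} {s : Multiset α} {N : ℕ} (h : card s = N) :
    ∃ f : Fin N → α, s = map f Finset.univ.val := by
  have hl : s.toList.length = N := by rw [Multiset.length_toList, h]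
  subst hl
  refine ⟨s.toList.get, ?_⟩
  conv_lhs => rw [← s.coe_toList, ← List.map_get_finRange s.toList]
  rfl

theorem eventually_mem_iff_of_tendsto {X ι : Type*} [TopologicalSpace X] {l : Filter ι}
    {K₁ K₂ : Set X} (h₁ : IsClosed K₁) (h₂ : IsClosed K₂) (hd : Disjoint K₁ K₂) {u : ι → X}
    {x : X} (hu : ∀ i, u i ∈ K₁ ∪ K₂) (hx : Tendsto u l (𝓝 x)) :
    ∀ᶠ i in l, (u i ∈ K₁ ↔ x ∈ K₁) := by
  by_cases hx₁ : x ∈ K₁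
  · filter_upwards [hx.eventually (h₂.isOpen_compl.mem_nhds (hd.notMem_of_mem_left hx₁))]
      with i hi
    simpa [hx₁, hi] using hu i
  · filter_upwards [hx.eventually (h₁.isOpen_compl.mem_nhds hx₁)] with i hi
    simp [hx₁, hi]

theorem Polynomial.eq_C_mul_prod_X_sub_C {K : Type*} [Field K] [IsAlgClosed K] {p : K[X]}
    {N : ℕ} {r : Fin N → K} (hr : p.roots = Multiset.map r Finset.univ.val) :
    p = C p.leadingCoeff * ∏ i, (X - C (r i)) := by
  conv_lhs =>
    rw [← C_leadingCoeff_mul_prod_multiset_X_sub_C (p := p) IsAlgClosed.card_roots_eq_natDegree]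
  rw [hr, Multiset.map_map]
  rfl

section RootCount

variable {K : Type*} [Field K] [IsAlgClosed K] [TopologicalSpace K] [IsTopologicalRing K]
  [T2Space K]

theorem Polynomial.roots_eq_map_of_tendsto {ι : Type*} {l : Filter ι} [l.NeBot] {N : ℕ}
    {p : ι → K[X]} {p₀ : K[X]} {r : ι → Fin N → K} {r₀ : Fin N → K}
    (hp : ∀ k, Tendsto (fun i => (p i).coeff k) l (𝓝 (p₀.coeff k)))
    (hdeg : ∀ i, (p i).degree = N) (hdeg₀ : p₀.degree = N)
    (hr : ∀ i, (p i).roots = Multiset.map (r i) Finset.univ.val) (hr₀ : Tendsto r l (𝓝 r₀)) :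
    p₀.roots = Multiset.map r₀ Finset.univ.val := by
  have hlc₀ : p₀.coeff N ≠ 0 := by
    rw [← natDegree_eq_of_degree_eq_some hdeg₀]
    exact leadingCoeff_ne_zero.2 fun h => by simp [h] at hdeg₀
  have hfactor : p₀ = C (p₀.coeff N) * ∏ i, (X - C (r₀ i)) := by
    ext k
    refine tendsto_nhds_unique (hp k) ?_
    have hprod : Continuous fun f : Fin N → K => (∏ i, (X - C (f i))).coeff k :=
      continuous_coeff_prod _ (fun i j => by
        simp only [coeff_sub, coeff_X, coeff_C]
        split_ifs <;> fun_prop) k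
    rw [coeff_C_mul]
    refine ((hp N).mul ((hprod.tendsto r₀).comp hr₀)).congr fun i => ?_
    conv_rhs => rw [eq_C_mul_prod_X_sub_C (hr i), coeff_C_mul,
      leadingCoeff, natDegree_eq_of_degree_eq_some (hdeg i)]
    rfl
  rw [hfactor, roots_C_mul _ hlc₀,
    roots_prod _ _ (Finset.prod_ne_zero_iff.2 fun i _ => X_sub_C_ne_zero _)]
  simp

variable [FirstCountableTopology K]

theorem Polynomial.exists_subseq_countP_roots_eq {N : ℕ} {p : ℕ → K[X]} {p₀ : K[X]}
    {K₁ K₂ : Set K} (h₁ : IsCompact K₁) (h₂ : IsCompact K₂) (hd : Disjoint K₁ K₂)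
    (hp : ∀ k, Tendsto (fun i => (p i).coeff k) atTop (𝓝 (p₀.coeff k)))
    (hdeg : ∀ i, (p i).degree = N) (hdeg₀ : p₀.degree = N)
    (hroots : ∀ i, ∀ z ∈ (p i).roots, z ∈ K₁ ∪ K₂) :
    ∃ φ : ℕ → ℕ, StrictMono φ ∧
      ∀ᶠ i in atTop, (p (φ i)).roots.countP (· ∈ K₁) = p₀.roots.countP (· ∈ K₁) := by
  -- The root tuples of `p i` live in the compact `(K₁ ∪ K₂)ᴺ`; along a convergent subsequence
  -- they tend to a root tuple of `p₀`, and each root eventually stays on the side of its limit.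
  choose r hr using fun i => Multiset.exists_eq_map_univ
    (IsAlgClosed.card_roots_eq_natDegree.trans (natDegree_eq_of_degree_eq_some (hdeg i)))
  have hrK : ∀ i, r i ∈ Set.univ.pi fun _ => K₁ ∪ K₂ := fun i j _ =>
    hroots i _ (hr i ▸ Multiset.mem_map_of_mem _ (Finset.mem_univ_val j))
  obtain ⟨r₀, -, φ, hφ, hr₀⟩ := (isCompact_univ_pi fun _ => h₁.union h₂).tendsto_subseq hrK
  have hroots₀ := roots_eq_map_of_tendsto (fun k => (hp k).comp hφ.tendsto_atTop)
    (fun i => hdeg (φ i)) hdeg₀ (fun i => hr (φ i)) hr₀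
  have hmem : ∀ᶠ i in atTop, ∀ j, (r (φ i) j ∈ K₁ ↔ r₀ j ∈ K₁) := eventually_all.2 fun j =>
    eventually_mem_iff_of_tendsto h₁.isClosed h₂.isClosed hd (fun i => hrK (φ i) j trivial)
      ((continuous_apply j).continuousAt.tendsto.comp hr₀)
  refine ⟨φ, hφ, hmem.mono fun i hi => ?_⟩
  rw [hr (φ i), hroots₀, Multiset.countP_map, Multiset.countP_map]
  exact congrArg _ (Multiset.filter_congr fun j _ => hi j)

theorem Polynomial.tendsto_countP_roots {N : ℕ} {p : ℕ → K[X]} {p₀ : K[X]}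
    {K₁ K₂ : Set K} (h₁ : IsCompact K₁) (h₂ : IsCompact K₂) (hd : Disjoint K₁ K₂)
    (hp : ∀ k, Tendsto (fun i => (p i).coeff k) atTop (𝓝 (p₀.coeff k)))
    (hdeg : ∀ i, (p i).degree = N) (hdeg₀ : p₀.degree = N)
    (hroots : ∀ i, ∀ z ∈ (p i).roots, z ∈ K₁ ∪ K₂) :
    Tendsto (fun i => (p i).roots.countP (· ∈ K₁)) atTop (𝓝 (p₀.roots.countP (· ∈ K₁))) := by
  refine tendsto_of_subseq_tendsto fun ns hns => ?_
  obtain ⟨φ, -, hφ⟩ := exists_subseq_countP_roots_eq h₁ h₂ hd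
    (fun k => (hp k).comp hns) (fun i => hdeg (ns i)) hdeg₀ (fun i => hroots (ns i))
  exact ⟨φ, by rwa [nhds_discrete, tendsto_pure]⟩

theorem Polynomial.countP_roots_eq_of_preconnectedSpace {T : Type*} [TopologicalSpace T]
    [SequentialSpace T] [PreconnectedSpace T] {N : ℕ} {p : T → K[X]}
    {K₁ K₂ : Set K} (h₁ : IsCompact K₁) (h₂ : IsCompact K₂) (hd : Disjoint K₁ K₂)
    (hp : ∀ k, Continuous fun t => (p t).coeff k) (hdeg : ∀ t, (p t).degree = N)
    (hroots : ∀ t, ∀ z ∈ (p t).roots, z ∈ K₁ ∪ K₂) (s t : T) :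
    (p s).roots.countP (· ∈ K₁) = (p t).roots.countP (· ∈ K₁) :=
  PreconnectedSpace.constant inferInstance <| continuous_iff_seqContinuous.2 fun _ _ hu =>
    tendsto_countP_roots h₁ h₂ hd (fun k => ((hp k).tendsto _).comp hu) (fun _ => hdeg _)
      (hdeg _) (fun _ => hroots _)

end RootCount

theorem sum_div_lt_inv_of_mul_lt {ι : Type*} [Fintype ι] {α d : ι → ℝ} {γ ρ : ℝ} (hρ : 0 < ρ)
    (hα : ∀ i, 0 ≤ α i) (hαγ : ∑ i, α i ≤ γ) (hd : ∀ i, γ * ρ < d i) :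
    ∑ i, α i / d i < ρ⁻¹ := by
  rcases (Finset.sum_nonneg fun i _ => hα i).eq_or_lt with hzero | hpos
  · have hα0 := (Finset.sum_eq_zero_iff_of_nonneg fun i _ => hα i).1 hzero.symm
    rw [Finset.sum_eq_zero fun i hi => by rw [hα0 i hi, zero_div]]
    exact inv_pos.2 hρ
  have hγρ : 0 < γ * ρ := mul_pos (hpos.trans_le hαγ) hρ
  obtain ⟨i₀, -, hi₀⟩ := Finset.exists_ne_zero_of_sum_ne_zero hpos.ne'
  calc ∑ i, α i / d i < ∑ i, α i / (γ * ρ) :=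
        Finset.sum_lt_sum (fun i _ => div_le_div_of_nonneg_left (hα i) hγρ (hd i).le)
          ⟨i₀, Finset.mem_univ _,
            div_lt_div_of_pos_left ((hα i₀).lt_of_ne' hi₀) hγρ (hd i₀)⟩
    _ = (∑ i, α i) / (γ * ρ) := (Finset.sum_div _ _ _).symm
    _ ≤ γ / (γ * ρ) := div_le_div_of_nonneg_right hαγ hγρ.le
    _ = ρ⁻¹ := by field_simp [(hpos.trans_le hαγ).ne']

theorem mul_pow_sub_lt_of_forall_mul_lt {a : ℕ → ℝ} {ρ : ℝ} (hρ : 0 < ρ) {n : ℕ}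
    (h : ∀ k < n, a k * ρ < a (k + 1)) : ∀ j < n, a j * ρ ^ (n - j) < a n := by
  induction n with
  | zero => simp
  | succ n ih =>
    intro j hj
    rcases (Nat.lt_succ_iff.1 hj).eq_or_lt with rfl | hjn
    · simpa using h j (Nat.lt_succ_self j)
    · calc a j * ρ ^ (n + 1 - j) = a j * ρ ^ (n - j) * ρ := by
            rw [Nat.sub_add_comm hjn.le, pow_succ, mul_assoc]
        _ < a n * ρ :=
            mul_lt_mul_of_pos_right (ih (fun k hk => h k (Nat.lt_succ_of_lt hk)) j hjn) hρ
        _ < a (n + 1) := h n (Nat.lt_succ_self n)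

theorem sum_mul_lt_of_mul_pow_sub_lt {c a : ℕ → ℝ} {C ρ : ℝ} {n : ℕ} (hc : ∀ j, 0 ≤ c j)
    (hρ : 0 < ρ) (hC : 0 < C) (hCρ : C * ρ ^ n = ∑ j ∈ Finset.range n, c j * ρ ^ j)
    (ha : ∀ j < n, a j * ρ ^ (n - j) < a n) :
    ∑ j ∈ Finset.range n, c j * a j < C * a n := by
  have hpos : 0 < ∑ j ∈ Finset.range n, c j * ρ ^ j := hCρ ▸ mul_pos hC (pow_pos hρ n)
  obtain ⟨j₀, hj₀, hcj₀⟩ := Finset.exists_ne_zero_of_sum_ne_zero hpos.ne'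
  have hterm : ∀ j ∈ Finset.range n,
      c j * a j * ρ ^ n = c j * ρ ^ j * (a j * ρ ^ (n - j)) := fun j hj => by
    rw [← pow_sub_mul_pow ρ (Finset.mem_range.1 hj).le]; ring
  refine lt_of_mul_lt_mul_right ?_ (pow_pos hρ n).le
  calc (∑ j ∈ Finset.range n, c j * a j) * ρ ^ n
      = ∑ j ∈ Finset.range n, c j * ρ ^ j * (a j * ρ ^ (n - j)) := by
        rw [Finset.sum_mul]; exact Finset.sum_congr rfl hterm
    _ < ∑ j ∈ Finset.range n, c j * ρ ^ j * a n :=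
        Finset.sum_lt_sum
          (fun j hj => mul_le_mul_of_nonneg_left (ha j (Finset.mem_range.1 hj)).le
            (mul_nonneg (hc j) (pow_nonneg hρ.le j)))
          ⟨j₀, hj₀, mul_lt_mul_of_pos_left (ha j₀ (Finset.mem_range.1 hj₀))
            ((mul_nonneg (hc j₀) (pow_nonneg hρ.le j₀)).lt_of_ne' hcj₀)⟩
    _ = C * a n * ρ ^ n := by rw [← Finset.sum_mul, ← hCρ]; ring

theorem Polynomial.norm_eval_mul_lt_of_norm_div_le {a b : ℂ[X]} (hb : b ≠ 0) {N : ℕ}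
    {r : Fin N → ℂ} {α : Fin N → ℝ} {γ ρ : ℝ} (hρ : 0 < ρ)
    (hr : b.roots = Multiset.map r Finset.univ.val) (hα : ∀ i, 0 ≤ α i) (hαγ : ∑ i, α i ≤ γ)
    (hratio : ∀ w : ℂ, b.eval w ≠ 0 → ‖a.eval w / b.eval w‖ ≤ ∑ i, α i / ‖w - r i‖)
    {z : ℂ} (hz : ∀ x ∈ b.roots, γ * ρ < ‖z - x‖) :
    ‖a.eval z‖ * ρ < ‖b.eval z‖ := by
  have hγ : 0 ≤ γ := (Finset.sum_nonneg fun i _ => hα i).trans hαγ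
  have hbz : b.eval z ≠ 0 := fun h => by
    simpa using (mul_nonneg hγ hρ.le).trans_lt (hz z ((mem_roots hb).2 h))
  have hlt : ‖a.eval z / b.eval z‖ < ρ⁻¹ := (hratio z hbz).trans_lt <|
    sum_div_lt_inv_of_mul_lt hρ hα hαγ fun i =>
      hz _ (hr ▸ Multiset.mem_map_of_mem _ (Finset.mem_univ_val i))
  rwa [norm_div, div_lt_iff₀ (norm_pos_iff.2 hbz), inv_mul_eq_div, lt_div_iff₀ hρ] at hlt

theorem IsUnit.smul_add_of_norm_lt {𝕜 𝔄 : Type*} [NormedField 𝕜] [NormedRing 𝔄]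
    [NormedAlgebra 𝕜 𝔄] [HasSummableGeomSeries 𝔄] {a b : 𝔄} (ha : IsUnit a) {c : 𝕜}
    (hc : c ≠ 0) (hb : ‖b‖ < ‖c‖ * ‖Ring.inverse a‖⁻¹) : IsUnit (c • a + b) := by
  have hsmall : ‖c⁻¹ • b‖ < ‖(↑ha.unit⁻¹ : 𝔄)‖⁻¹ := by
    rw [← Ring.inverse_unit, IsUnit.unit_spec, norm_smul, norm_inv,
      inv_mul_lt_iff₀ (norm_pos_iff.2 hc)]
    exact hb
  have hunit := (ha.unit.add _ hsmall).isUnit.smul (Units.mk0 c hc)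
  rwa [Units.val_add, IsUnit.unit_spec, Units.smul_def, Units.val_mk0, smul_add,
    smul_inv_smul₀ hc] at hunit

def RatioBound (q : ℕ → ℂ[X]) (n : ℕ) (γ : ℝ) : Prop :=
  ∀ j, 1 ≤ j → j ≤ n →
    ∃ (r : Fin j → ℂ) (α : Fin j → ℝ),
      (q j).roots = Multiset.map r Finset.univ.val ∧
      (∀ i, 0 ≤ α i) ∧ (∑ i, α i) ≤ γ ∧
      ∀ w : ℂ, (q j).eval w ≠ 0 →
        ‖(q (j - 1)).eval w / (q j).eval w‖ ≤ ∑ i, α i / ‖w - r i‖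

theorem isUnit_eval_smul_add_smul_sum {𝔄 : Type*} [NormedRing 𝔄] [NormedAlgebra ℂ 𝔄]
    [HasSummableGeomSeries 𝔄] [Nontrivial 𝔄] {n : ℕ} {q : ℕ → ℂ[X]}
    (hdeg : ∀ j ≤ n, (q j).degree = j) {γ : ℝ} (hbasis : RatioBound q n γ) {A : ℕ → 𝔄}
    (hAn : IsUnit (A n)) {ρ : ℝ} (hρ : 0 < ρ)
    (hρeq : ‖Ring.inverse (A n)‖⁻¹ * ρ ^ n = ∑ j ∈ Finset.range n, ‖A j‖ * ρ ^ j)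
    {z : ℂ} (hz : ∀ k, 1 ≤ k → k ≤ n → ∀ x ∈ (q k).roots, γ * ρ < ‖z - x‖)
    {t : ℂ} (ht : ‖t‖ ≤ 1) :
    IsUnit ((q n).eval z • A n + t • ∑ j ∈ Finset.range n, (q j).eval z • A j) := by
  have hstep : ∀ k < n, ‖(q k).eval z‖ * ρ < ‖(q (k + 1)).eval z‖ := fun k hk => by
    obtain ⟨r, α, hr, hα, hαγ, hratio⟩ := hbasis (k + 1) k.succ_pos hk
    have hq : q (k + 1) ≠ 0 := fun h => WithBot.bot_ne_coe (h ▸ hdeg (k + 1) hk)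
    exact norm_eval_mul_lt_of_norm_div_le hq hρ hr hα hαγ hratio (hz _ k.succ_pos hk)
  have hinv : 0 < ‖Ring.inverse (A n)‖⁻¹ := by
    rw [← hAn.unit_spec, Ring.inverse_unit]
    exact inv_pos.2 (Units.norm_pos _)
  have hsum := sum_mul_lt_of_mul_pow_sub_lt (fun j => norm_nonneg (A j)) hρ hinv hρeq
    (mul_pow_sub_lt_of_forall_mul_lt hρ hstep)
  have hqn : (q n).eval z ≠ 0 := fun h => by
    simpa [h] using (Finset.sum_nonneg fun j _ =>
      mul_nonneg (norm_nonneg (A j)) (norm_nonneg ((q j).eval z))).trans_lt hsum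
  refine hAn.smul_add_of_norm_lt hqn ?_
  calc ‖t • ∑ j ∈ Finset.range n, (q j).eval z • A j‖
      ≤ ‖∑ j ∈ Finset.range n, (q j).eval z • A j‖ := by
        rw [norm_smul]; exact mul_le_of_le_one_left (norm_nonneg _) ht
    _ ≤ ∑ j ∈ Finset.range n, ‖A j‖ * ‖(q j).eval z‖ :=
        (norm_sum_le _ _).trans_eq (Finset.sum_congr rfl fun j _ => by rw [norm_smul, mul_comm])
    _ < ‖Ring.inverse (A n)‖⁻¹ * ‖(q n).eval z‖ := hsum
    _ = ‖(q n).eval z‖ * ‖Ring.inverse (A n)‖⁻¹ := mul_comm _ _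

section MatrixPolynomial

variable {R ι : Type*} [CommRing R]

theorem Matrix.natDegree_det_le_of_natDegree_le [Fintype ι] [DecidableEq ι]
    {M : Matrix ι ι R[X]} {n : ℕ} (h : ∀ i j, (M i j).natDegree ≤ n) :
    M.det.natDegree ≤ Fintype.card ι * n := by
  rw [Matrix.det_apply]
  refine natDegree_sum_le_of_forall_le _ _ fun σ _ => ?_
  rw [Units.smul_def]
  refine (natDegree_smul_le _ _).trans ((natDegree_prod_le _ _).trans ?_)
  exact (Finset.sum_le_card_nsmul _ _ n fun i _ => h (σ i) i).trans_eq (by simp)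

theorem Matrix.coeff_det_of_natDegree_le [Fintype ι] [DecidableEq ι] {M : Matrix ι ι R[X]}
    {n : ℕ} (h : ∀ i j, (M i j).natDegree ≤ n) :
    M.det.coeff (Fintype.card ι * n) = (M.map fun p => p.coeff n).det := by
  simp only [Matrix.det_apply, finsetSum_coeff, coeff_smul, Matrix.map_apply]
  refine Finset.sum_congr rfl fun σ _ => ?_
  rw [← Finset.card_univ, coeff_prod_of_natDegree_le _ _ n fun i _ => h (σ i) i]

noncomputable def matPolyHomotopy (q : ℕ → R[X]) (A : ℕ → Matrix ι ι R) (n : ℕ) (t : R) :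
    Matrix ι ι R[X] :=
  q n • (A n).map C + t • ∑ j ∈ Finset.range n, q j • (A j).map C

variable (q : ℕ → R[X]) (A : ℕ → Matrix ι ι R) (n : ℕ)

theorem matPolyHomotopy_apply (t : R) (i j : ι) :
    matPolyHomotopy q A n t i j =
      q n * C (A n i j) + C t * ∑ k ∈ Finset.range n, q k * C (A k i j) := by
  simp [matPolyHomotopy, Matrix.sum_apply, Polynomial.smul_eq_C_mul]

theorem matPolyHomotopy_one :
    matPolyHomotopy q A n 1 = ∑ j ∈ Finset.range (n + 1), q j • (A j).map C := by
  rw [matPolyHomotopy, one_smul, Finset.sum_range_succ, add_comm]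

variable [Fintype ι] [DecidableEq ι]

theorem det_matPolyHomotopy_zero :
    (matPolyHomotopy q A n 0).det = C (A n).det * q n ^ Fintype.card ι := by
  rw [matPolyHomotopy, zero_smul, add_zero, Matrix.det_smul, mul_comm, RingHom.map_det]
  rfl

theorem eval_det_matPolyHomotopy (t z : R) :
    (matPolyHomotopy q A n t).det.eval z =
      ((q n).eval z • A n + t • ∑ j ∈ Finset.range n, (q j).eval z • A j).det := by
  rw [← coe_evalRingHom, RingHom.map_det]
  congr 1
  ext i j
  simp [matPolyHomotopy_apply, Matrix.sum_apply, eval_finsetSum, Finset.mul_sum]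

variable {q n}

theorem degree_det_matPolyHomotopy [IsDomain R] (hdeg : ∀ j ≤ n, (q j).degree = j)
    (hA : (A n).det ≠ 0) (t : R) :
    (matPolyHomotopy q A n t).det.degree = (Fintype.card ι * n : ℕ) := by
  have hnat : ∀ j ≤ n, (q j).natDegree = j := fun j hj =>
    natDegree_eq_of_degree_eq_some (hdeg j hj)
  have hentry : ∀ i j, (matPolyHomotopy q A n t i j).natDegree ≤ n := fun i j => by
    rw [matPolyHomotopy_apply]
    refine natDegree_add_le_of_degree_le ((natDegree_mul_C_le _ _).trans (hnat n le_rfl).le)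
      ((natDegree_C_mul_le _ _).trans (natDegree_sum_le_of_forall_le _ _ fun k hk =>
        (natDegree_mul_C_le _ _).trans
          ((hnat k (Finset.mem_range.1 hk).le).trans_le (Finset.mem_range.1 hk).le)))
  have htop : (matPolyHomotopy q A n t).map (fun p => p.coeff n) = (q n).leadingCoeff • A n := by
    ext i j
    have hlow : ∀ k ∈ Finset.range n, (q k).coeff n = 0 := fun k hk =>
      coeff_eq_zero_of_natDegree_lt
        ((hnat k (Finset.mem_range.1 hk).le).trans_lt (Finset.mem_range.1 hk))
    simp only [Matrix.map_apply, matPolyHomotopy_apply, coeff_add, coeff_mul_C, coeff_C_mul,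
      finsetSum_coeff, Matrix.smul_apply, smul_eq_mul]
    rw [Finset.sum_eq_zero fun k hk => by rw [hlow k hk, zero_mul], mul_zero, add_zero,
      leadingCoeff, hnat n le_rfl]
  refine degree_eq_of_le_of_coeff_ne_zero (degree_le_natDegree.trans
    (WithBot.coe_le_coe.2 (Matrix.natDegree_det_le_of_natDegree_le hentry))) ?_
  rw [Matrix.coeff_det_of_natDegree_le hentry, htop, Matrix.det_smul]
  exact mul_ne_zero
    (pow_ne_zero _ (leadingCoeff_ne_zero.2 (ne_zero_of_coe_le_degree (hdeg n le_rfl).ge))) hA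

theorem continuous_coeff_det_matPolyHomotopy [TopologicalSpace R] [IsTopologicalRing R] (k : ℕ) :
    Continuous fun t => (matPolyHomotopy q A n t).det.coeff k :=
  Matrix.continuous_coeff_det (fun i j k => by
    simp only [matPolyHomotopy_apply, coeff_add, coeff_C_mul, coeff_mul_C]
    fun_prop) k

end MatrixPolynomial

theorem mem_of_mem_roots_det_matPolyHomotopy {ι : Type*} [Fintype ι] [DecidableEq ι] {n : ℕ}
    {q : ℕ → ℂ[X]} (hdeg : ∀ j ≤ n, (q j).degree = j) {γ : ℝ} (hbasis : RatioBound q n γ)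
    {A : ℕ → Matrix ι ι ℂ} (hAn : IsUnit (A n)) {ρ : ℝ} (hρ : 0 < ρ)
    (hρeq : ‖(A n)⁻¹‖⁻¹ * ρ ^ n = ∑ j ∈ Finset.range n, ‖A j‖ * ρ ^ j) {R : Set ℂ}
    (hR : ∀ k, 1 ≤ k → k ≤ n → ∀ x ∈ (q k).roots, Metric.closedBall x (γ * ρ) ⊆ R)
    {t : ℂ} (ht : ‖t‖ ≤ 1) {z : ℂ} (hz : z ∈ (matPolyHomotopy q A n t).det.roots) : z ∈ R := by
  rcases isEmpty_or_nonempty ι with _ | _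
  · simp [Matrix.det_isEmpty] at hz
  by_contra hzR
  have hfar : ∀ k, 1 ≤ k → k ≤ n → ∀ x ∈ (q k).roots, γ * ρ < ‖z - x‖ :=
    fun k hk₁ hk₂ x hx => by
      simpa [dist_eq_norm] using fun h => hzR (hR k hk₁ hk₂ x hx h)
  have hunit := isUnit_eval_smul_add_smul_sum hdeg hbasis hAn hρ
    (by rwa [← Matrix.nonsing_inv_eq_ringInverse]) hfar ht
  rw [Matrix.isUnit_iff_isUnit_det, ← eval_det_matPolyHomotopy] at hunit
  exact hunit.ne_zero (isRoot_of_mem_roots hz)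

theorem Polynomial.finite_setOf_exists_mem_roots {R : Type*} [CommRing R] [IsDomain R]
    (q : ℕ → R[X]) (n : ℕ) : {x | ∃ k, 1 ≤ k ∧ k ≤ n ∧ x ∈ (q k).roots}.Finite :=
  ((Set.finite_Icc 1 n).biUnion fun k _ => (q k).roots.toFinset.finite_toSet).subset
    fun _ ⟨_, hk₁, hk₂, hx⟩ => Set.mem_biUnion ⟨hk₁, hk₂⟩ (Multiset.mem_toFinset.2 hx)

theorem main_counting_general (n : ℕ) (q : ℕ → Polynomial ℂ)
    (hdeg : ∀ j ≤ n, (q j).degree = j) (γ : ℝ)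
    (hbasis : ∀ j, 1 ≤ j → j ≤ n →
      ∃ (r : Fin j → ℂ) (α : Fin j → ℝ),
        (q j).roots = Multiset.map r Finset.univ.val ∧
        (∀ i, 0 ≤ α i) ∧ (∑ i, α i) ≤ γ ∧
        ∀ w : ℂ, (q j).eval w ≠ 0 →
          ‖(q (j - 1)).eval w / (q j).eval w‖ ≤
            ∑ i, α i / ‖w - r i‖)
    (m : ℕ) (A : ℕ → Matrix (Fin m) (Fin m) ℂ) (hAn : IsUnit (A n))
    (ρ : ℝ) (hρ : 0 < ρ)
    (hρeq : ‖(A n)⁻¹‖⁻¹ * ρ ^ n = ∑ j ∈ Finset.range n, ‖A j‖ * ρ ^ j)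
    (S₁ S₂ : Set ℂ)
    (hS : S₁ ∪ S₂ = {r : ℂ | ∃ k, 1 ≤ k ∧ k ≤ n ∧ r ∈ (q k).roots})
    (R₁ R₂ : Set ℂ)
    (hR₁ : R₁ = ⋃ r ∈ S₁, Metric.closedBall r (γ * ρ))
    (hR₂ : R₂ = ⋃ r ∈ S₂, Metric.closedBall r (γ * ρ))
    (hdisj : R₁ ∩ R₂ = ∅) :
    ((∑ j ∈ Finset.range (n + 1),
        q j • (A j).map Polynomial.C).det).roots.countP (fun x => x ∈ R₁) =
      m * ((q n).roots.countP fun x => x ∈ R₁) := by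
  have hball : ∀ k, 1 ≤ k → k ≤ n → ∀ x ∈ (q k).roots,
      Metric.closedBall x (γ * ρ) ⊆ R₁ ∪ R₂ := fun k hk₁ hk₂ x hx => by
    have hx' : x ∈ S₁ ∪ S₂ := hS ▸ ⟨k, hk₁, hk₂, hx⟩
    rw [hR₁, hR₂, ← Set.biUnion_union]
    exact Set.subset_biUnion_of_mem (u := fun r => Metric.closedBall r (γ * ρ)) hx'
  have hS_fin : (S₁ ∪ S₂).Finite := hS ▸ finite_setOf_exists_mem_roots q n
  have hR₁_cpt : IsCompact R₁ := hR₁ ▸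
    (hS_fin.subset Set.subset_union_left).isCompact_biUnion fun _ _ => isCompact_closedBall _ _
  have hR₂_cpt : IsCompact R₂ := hR₂ ▸
    (hS_fin.subset Set.subset_union_right).isCompact_biUnion fun _ _ => isCompact_closedBall _ _
  have hdetAn : (A n).det ≠ 0 := ((Matrix.isUnit_iff_isUnit_det _).1 hAn).ne_zero
  have hconst := countP_roots_eq_of_preconnectedSpace (T := unitInterval)
    (p := fun t => (matPolyHomotopy q A n (t : ℂ)).det) hR₁_cpt hR₂_cpt
    (Set.disjoint_iff_inter_eq_empty.2 hdisj)
    (fun k => (continuous_coeff_det_matPolyHomotopy A k).comp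
      (Complex.continuous_ofReal.comp continuous_subtype_val))
    (fun t => degree_det_matPolyHomotopy A hdeg hdetAn _)
    (fun t z hz => mem_of_mem_roots_det_matPolyHomotopy hdeg hbasis hAn hρ hρeq hball
      (by simpa [abs_of_nonneg t.2.1] using t.2.2) hz) 1 0
  simp only [Set.Icc.coe_one, Set.Icc.coe_zero, Complex.ofReal_one, Complex.ofReal_zero,
    matPolyHomotopy_one, det_matPolyHomotopy_zero] at hconst
  rw [hconst, roots_C_mul _ hdetAn, roots_pow, Multiset.countP_nsmul, Fintype.card_fin]

/-- Counting part of the main theorem: with the ratio condition on the basis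
`q 0, …, q n`, `A n` invertible, and `ρ > 0` the positive root of
`‖(A n)⁻¹‖⁻¹ ρ^n = ∑_{j<n} ‖A j‖ ρ^j`, if the union `R` of the closed disks
of radius `γρ` about the roots of `q 1, …, q n` splits as a disjoint union of
two nonempty parts `R₁`, `R₂`, each a union of some of these disks, then the
number of zeros of `det P` in `R₁` (with multiplicity), where
`P(z) = ∑_{j≤n} A j q j (z)`, equals `m` times the number of zeros of `q n`
in `R₁` (with multiplicity). -/
theorem main_counting (n : ℕ) (hn : 1 ≤ n) (q : ℕ → Polynomial ℂ)
    (hdeg : ∀ j ≤ n, (q j).degree = j) (γ : ℝ) (hγ : 0 < γ)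
    (hbasis : ∀ j, 1 ≤ j → j ≤ n →
      ∃ (r : Fin j → ℂ) (α : Fin j → ℝ),
        (q j).roots = Multiset.map r Finset.univ.val ∧
        (∀ i, 0 ≤ α i) ∧ (∑ i, α i) ≤ γ ∧
        ∀ w : ℂ, (q j).eval w ≠ 0 →
          ‖(q (j - 1)).eval w / (q j).eval w‖ ≤
            ∑ i, α i / ‖w - r i‖)
    (m : ℕ) (A : ℕ → Matrix (Fin m) (Fin m) ℂ) (hAn : IsUnit (A n))
    (ρ : ℝ) (hρ : 0 < ρ)
    (hρeq : ‖(A n)⁻¹‖⁻¹ * ρ ^ n = ∑ j ∈ Finset.range n, ‖A j‖ * ρ ^ j)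
    (S₁ S₂ : Set ℂ)
    (hS : S₁ ∪ S₂ = {r : ℂ | ∃ k, 1 ≤ k ∧ k ≤ n ∧ r ∈ (q k).roots})
    (hS₁ : S₁.Nonempty) (hS₂ : S₂.Nonempty)
    (R₁ R₂ : Set ℂ)
    (hR₁ : R₁ = ⋃ r ∈ S₁, Metric.closedBall r (γ * ρ))
    (hR₂ : R₂ = ⋃ r ∈ S₂, Metric.closedBall r (γ * ρ))
    (hdisj : R₁ ∩ R₂ = ∅) :
    ((∑ j ∈ Finset.range (n + 1),
        q j • (A j).map Polynomial.C).det).roots.countP (fun x => x ∈ R₁) =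
      m * ((q n).roots.countP fun x => x ∈ R₁) :=
  main_counting_general n q hdeg γ hbasis m A hAn ρ hρ hρeq S₁ S₂ hS R₁ R₂ hR₁ hR₂ hdisj
end

section
/- Let a_1, …, a_n be complex numbers (n ≥ 1), and define the Newton basis polynomials q_0(z) = 1 and q_j(z) = (z − a_1)(z − a_2)⋯(z − a_j) for 1 ≤ j ≤ n. Let A_0, …, A_n be m×m complex matrices with A_n invertible, and let z be a complex number with det(A_n q_n(z) + A_{n−1} q_{n−1}(z) + ⋯ + A_0 q_0(z)) = 0. Set d = min_{1 ≤ i ≤ n} |z − a_i|. Then ‖A_n^{-1}‖^{-1} d^n ≤ Σ_{j=0}^{n−1} ‖A_j‖ d^j, where ‖·‖ denotes the L∞ operator norm on m×m complex matrices (the maximum absolute row-sum norm, i.e., the operator norm induced by the sup norm on ℂ^m). Equivalently, z lies in the union of the closed disks {w : |w − a_i| ≤ ρ}, 1 ≤ i ≤ n, where ρ is any positive number with ‖A_n^{-1}‖^{-1} ρ^n = Σ_{j=0}^{n−1} ‖A_j‖ ρ^j. -/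
attribute [local instance] Matrix.linftyOpNormedRing

/-!
Write `S = ∑_{j<n} q_j A_j`. A kernel vector `v` of `q_n A_n + S` satisfies
`q_n v = -A_n⁻¹ S v`, whence `|q_n| ‖A_n⁻¹‖⁻¹ ≤ ‖S‖`. Every factor of `q_n / q_j` has modulus at
least `d`, so `|q_j| d^(n-j) ≤ |q_n|`, and the triangle inequality yields the first claim. The
second follows because `ρ ↦ ∑_{j<n} ‖A_j‖ ρ^(j-n)` is strictly decreasing, every exponent being
at most `-1`.
-/

open Finset

attribute [local instance] Matrix.linftyOpNormedSpace

namespace Matrix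

variable {𝕜 ι : Type*} [NormedField 𝕜] [Fintype ι] [DecidableEq ι]

theorem norm_inv_inv_le_norm_of_det_add_eq_zero {A R : Matrix ι ι 𝕜} (hA : IsUnit A)
    (h : (A + R).det = 0) : ‖A⁻¹‖⁻¹ ≤ ‖R‖ := by
  obtain ⟨v, hv0, hv⟩ := exists_mulVec_eq_zero_iff.mpr h
  have hAv : A *ᵥ v = -(R *ᵥ v) := by rwa [add_mulVec, add_eq_zero_iff_eq_neg] at hv
  have hv_eq : v = -((A⁻¹ * R) *ᵥ v) := by
    rw [← mulVec_mulVec, ← mulVec_neg, ← hAv, mulVec_mulVec,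
      nonsing_inv_mul _ ((isUnit_iff_isUnit_det A).mp hA), one_mulVec]
  have hv_le : ‖v‖ ≤ ‖A⁻¹‖ * ‖R‖ * ‖v‖ :=
    calc ‖v‖ = ‖(A⁻¹ * R) *ᵥ v‖ := by rw [hv_eq, norm_neg, ← hv_eq]
      _ ≤ ‖A⁻¹ * R‖ * ‖v‖ := linfty_opNorm_mulVec _ _
      _ ≤ ‖A⁻¹‖ * ‖R‖ * ‖v‖ := by gcongr; exact norm_mul_le _ _
  have hone : 1 ≤ ‖A⁻¹‖ * ‖R‖ :=
    le_of_mul_le_mul_right (by simpa using hv_le) (norm_pos_iff.mpr hv0)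
  have hA_pos : 0 < ‖A⁻¹‖ := (norm_nonneg _).lt_of_ne fun h0 => by norm_num [← h0] at hone
  exact (inv_le_iff_one_le_mul₀' hA_pos).mpr hone

theorem norm_inv_inv_mul_norm_le_of_det_smul_add_eq_zero {A R : Matrix ι ι 𝕜} (hA : IsUnit A)
    (c : 𝕜) (h : (c • A + R).det = 0) : ‖A⁻¹‖⁻¹ * ‖c‖ ≤ ‖R‖ := by
  rcases eq_or_ne c 0 with rfl | hc
  · simp
  have hdet : (A + c⁻¹ • R).det = 0 := by
    rw [← inv_smul_smul₀ hc A, ← smul_add, det_smul, h, mul_zero]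
  have key := norm_inv_inv_le_norm_of_det_add_eq_zero hA hdet
  rwa [norm_smul, norm_inv, ← div_eq_inv_mul, le_div_iff₀ (norm_pos_iff.mpr hc)] at key

end Matrix

theorem prod_range_mul_pow_le_pow_mul_prod_range {f : ℕ → ℝ} {d : ℝ} {j n : ℕ} (hjn : j ≤ n)
    (hf : ∀ i, 0 ≤ f i) (hd : 0 ≤ d) (hdf : ∀ i ∈ Ico j n, d ≤ f i) :
    (∏ i ∈ range j, f i) * d ^ n ≤ d ^ j * ∏ i ∈ range n, f i := by
  have hpow : d ^ (n - j) ≤ ∏ i ∈ Ico j n, f i := by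
    simpa using prod_le_prod (fun _ _ => hd) hdf
  calc (∏ i ∈ range j, f i) * d ^ n = d ^ j * ((∏ i ∈ range j, f i) * d ^ (n - j)) := by
        rw [← pow_sub_mul_pow d hjn]; ring
    _ ≤ d ^ j * ((∏ i ∈ range j, f i) * ∏ i ∈ Ico j n, f i) := by
        gcongr
        exact prod_nonneg fun i _ => hf i
    _ = d ^ j * ∏ i ∈ range n, f i := by rw [prod_range_mul_prod_Ico f hjn]

theorem mul_pow_le_sum_norm_mul_pow_of_mul_norm_prod_le {𝕜 E : Type*} [NormedField 𝕜]
    [SeminormedAddCommGroup E] [NormedSpace 𝕜 E] {n : ℕ} (hn : n ≠ 0) {a : ℕ → 𝕜} {z : 𝕜}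
    {d κ : ℝ} {B : ℕ → E} (hd0 : 0 ≤ d) (hd : ∀ i < n, d ≤ ‖z - a i‖)
    (h : κ * ‖∏ i ∈ range n, (z - a i)‖ ≤ ‖∑ j ∈ range n, (∏ i ∈ range j, (z - a i)) • B j‖) :
    κ * d ^ n ≤ ∑ j ∈ range n, ‖B j‖ * d ^ j := by
  rcases hd0.eq_or_lt with rfl | hd_pos
  · rw [zero_pow hn, mul_zero]
    exact sum_nonneg fun j _ => by positivity
  have hq : ∀ j ≤ n, ‖∏ i ∈ range j, (z - a i)‖ * d ^ n ≤ d ^ j * ‖∏ i ∈ range n, (z - a i)‖ := by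
    intro j hj
    simp only [norm_prod]
    exact prod_range_mul_pow_le_pow_mul_prod_range hj (fun _ => norm_nonneg _) hd0
      fun i hi => hd i (mem_Ico.mp hi).2
  have hqn_pos : 0 < ‖∏ i ∈ range n, (z - a i)‖ :=
    (pow_pos hd_pos n).trans_le (by simpa using hq 0 (Nat.zero_le n))
  refine le_of_mul_le_mul_right ?_ hqn_pos
  calc κ * d ^ n * ‖∏ i ∈ range n, (z - a i)‖
      = κ * ‖∏ i ∈ range n, (z - a i)‖ * d ^ n := by ring
    _ ≤ ‖∑ j ∈ range n, (∏ i ∈ range j, (z - a i)) • B j‖ * d ^ n := by gcongr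
    _ ≤ (∑ j ∈ range n, ‖B j‖ * ‖∏ i ∈ range j, (z - a i)‖) * d ^ n := by
        gcongr
        refine (norm_sum_le _ _).trans_eq (sum_congr rfl fun j _ => ?_)
        rw [norm_smul, mul_comm]
    _ ≤ ∑ j ∈ range n, ‖B j‖ * (d ^ j * ‖∏ i ∈ range n, (z - a i)‖) := by
        rw [sum_mul]
        refine sum_le_sum fun j hj => ?_
        rw [mul_assoc]
        exact mul_le_mul_of_nonneg_left (hq j (mem_range.mp hj).le) (norm_nonneg _)
    _ = (∑ j ∈ range n, ‖B j‖ * d ^ j) * ‖∏ i ∈ range n, (z - a i)‖ := by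
        rw [sum_mul]; simp only [mul_assoc]

theorem pow_mul_pow_mul_le_pow_mul_pow_mul {ρ d : ℝ} (hρ : 0 ≤ ρ) (hρd : ρ ≤ d) {j n : ℕ}
    (hjn : j < n) : d ^ j * ρ ^ n * d ≤ ρ ^ j * d ^ n * ρ := by
  obtain ⟨k, rfl⟩ := Nat.exists_eq_add_of_lt hjn
  calc d ^ j * ρ ^ (j + k + 1) * d = (d * ρ) ^ (j + 1) * ρ ^ k := by ring
    _ ≤ (d * ρ) ^ (j + 1) * d ^ k := by have hd : 0 ≤ d := hρ.trans hρd; gcongr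
    _ = ρ ^ j * d ^ (j + k + 1) * ρ := by ring

theorem le_of_mul_pow_le_sum_of_mul_pow_eq_sum {κ d ρ : ℝ} {n : ℕ} {c : ℕ → ℝ} (hκ : 0 < κ)
    (hc : ∀ j, 0 ≤ c j) (hρ : 0 < ρ) (hd : κ * d ^ n ≤ ∑ j ∈ range n, c j * d ^ j)
    (hρeq : κ * ρ ^ n = ∑ j ∈ range n, c j * ρ ^ j) : d ≤ ρ := by
  rcases le_total d ρ with h | hρd
  · exact h
  have hsum : (∑ j ∈ range n, c j * d ^ j) * ρ ^ n * d ≤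
      (∑ j ∈ range n, c j * ρ ^ j) * d ^ n * ρ := by
    simp only [sum_mul]
    refine sum_le_sum fun j hj => ?_
    calc c j * d ^ j * ρ ^ n * d = c j * (d ^ j * ρ ^ n * d) := by ring
      _ ≤ c j * (ρ ^ j * d ^ n * ρ) := mul_le_mul_of_nonneg_left
          (pow_mul_pow_mul_le_pow_mul_pow_mul hρ.le hρd (mem_range.mp hj)) (hc j)
      _ = c j * ρ ^ j * d ^ n * ρ := by ring
  have hd0 : 0 < d := hρ.trans_le hρd
  have hpos : 0 < κ * ρ ^ n * d ^ n := by positivity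
  refine le_of_mul_le_mul_left ?_ hpos
  calc κ * ρ ^ n * d ^ n * d = κ * d ^ n * ρ ^ n * d := by ring
    _ ≤ (∑ j ∈ range n, c j * d ^ j) * ρ ^ n * d := by gcongr
    _ ≤ (∑ j ∈ range n, c j * ρ ^ j) * d ^ n * ρ := hsum
    _ = κ * ρ ^ n * d ^ n * ρ := by rw [← hρeq]

theorem newton_basis_inclusion_general (m n : ℕ) (a : ℕ → ℂ)
    (A : ℕ → Matrix (Fin m) (Fin m) ℂ) (hAn : IsUnit (A n)) (z : ℂ)
    (hz : (∑ j ∈ Finset.range (n + 1),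
      (∏ i ∈ Finset.range j, (z - a i)) • A j).det = 0)
    (d : ℝ)
    (hd : IsLeast {x : ℝ | ∃ i < n, x = ‖z - a i‖} d) :
    ‖(A n)⁻¹‖⁻¹ * d ^ n ≤ ∑ j ∈ Finset.range n, ‖A j‖ * d ^ j ∧
    ∀ ρ : ℝ, 0 < ρ →
      ‖(A n)⁻¹‖⁻¹ * ρ ^ n = ∑ j ∈ Finset.range n, ‖A j‖ * ρ ^ j →
      ∃ i < n, ‖z - a i‖ ≤ ρ := by
  obtain ⟨⟨i₀, hi₀, rfl⟩, hd_low⟩ := hd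
  have hd_le : ∀ i < n, ‖z - a i₀‖ ≤ ‖z - a i‖ := fun i hi => hd_low ⟨i, hi, rfl⟩
  rw [sum_range_succ, add_comm] at hz
  have hbound := mul_pow_le_sum_norm_mul_pow_of_mul_norm_prod_le (by omega) (norm_nonneg _) hd_le
    (Matrix.norm_inv_inv_mul_norm_le_of_det_smul_add_eq_zero hAn _ hz)
  have : Nonempty (Fin m) := by
    by_contra hm
    rw [not_nonempty_iff] at hm
    simp [Matrix.det_isEmpty] at hz
  have hκ : 0 < ‖(A n)⁻¹‖⁻¹ :=
    inv_pos.mpr (norm_pos_iff.mpr (Matrix.isUnit_nonsing_inv_iff.mpr hAn).ne_zero)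
  exact ⟨hbound, fun ρ hρ hρ_eq => ⟨i₀, hi₀,
    le_of_mul_pow_le_sum_of_mul_pow_eq_sum hκ (fun _ => norm_nonneg _) hρ hbound hρ_eq⟩⟩

/-- The main theorem specialized to the Newton basis with nodes
`a 0, …, a (n-1)`, i.e. `q j (z) = ∏_{i<j} (z - a i)`: if `A n` is invertible
and `det (∑_{j≤n} A j q j (z)) = 0`, then with `d = min_{i<n} |z - a i|` one
has `‖(A n)⁻¹‖⁻¹ d^n ≤ ∑_{j<n} ‖A j‖ d^j` (L∞ operator norm); equivalently,
`z` lies within distance `ρ` of some node, where `ρ` is any positive root of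
`‖(A n)⁻¹‖⁻¹ ρ^n = ∑_{j<n} ‖A j‖ ρ^j`. -/
theorem newton_basis_inclusion (m n : ℕ) (hn : 1 ≤ n) (a : ℕ → ℂ)
    (A : ℕ → Matrix (Fin m) (Fin m) ℂ) (hAn : IsUnit (A n)) (z : ℂ)
    (hz : (∑ j ∈ Finset.range (n + 1),
      (∏ i ∈ Finset.range j, (z - a i)) • A j).det = 0)
    (d : ℝ)
    (hd : IsLeast {x : ℝ | ∃ i < n, x = ‖z - a i‖} d) :
    ‖(A n)⁻¹‖⁻¹ * d ^ n ≤ ∑ j ∈ Finset.range n, ‖A j‖ * d ^ j ∧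
    ∀ ρ : ℝ, 0 < ρ →
      ‖(A n)⁻¹‖⁻¹ * ρ ^ n = ∑ j ∈ Finset.range n, ‖A j‖ * ρ ^ j →
      ∃ i < n, ‖z - a i‖ ≤ ρ :=
  newton_basis_inclusion_general m n a A hAn z hz d hd
end

section
/- Let A_0, A_1 be m×m complex matrices, let a, b be complex numbers, and let z be a complex number with det(z²I + z A_1 + A_0) = 0. Set d = min(|z − a|, |z − b|). Then d² ≤ ‖A_1 + (a + b)I‖ · d + ‖a A_1 + A_0 + a² I‖, where ‖·‖ denotes the L∞ operator norm on m×m complex matrices (the maximum absolute row-sum norm, i.e., the operator norm induced by the sup norm on ℂ^m). In particular, every eigenvalue of the monic quadratic matrix polynomial Iz² + A_1 z + A_0 lies within distance ρ of a or of b, where ρ is the positive root of x² = ‖A_1 + (a + b)I‖ x + ‖a A_1 + A_0 + a² I‖. -/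
attribute [local instance] Matrix.linftyOpNormedRing

/-!
In the Newton basis, `z² I + z A₁ + A₀ = (z - a)(z - b) I + (z - a) B + C` with
`B = A₁ + (a + b) I` and `C = a A₁ + A₀ + a² I`. For a null vector `v` of this matrix,
`(z - a) ((z - b) v + B v) = - C v`; taking sup norms gives `|z - a| (|z - b| - ‖B‖) ≤ ‖C‖`,
which forces `d² ≤ ‖B‖ d + ‖C‖`. As `x² - ‖B‖ x - ‖C‖` is positive for `x > ρ`, `d ≤ ρ`.
-/

theorem sq_smul_one_add_smul_add_eq_newton {R M : Type*} [CommRing R] [Ring M] [Algebra R M]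
    (A₀ A₁ : M) (a b z : R) :
    z ^ 2 • (1 : M) + z • A₁ + A₀ =
      ((z - a) * (z - b)) • (1 : M) + (z - a) • (A₁ + (a + b) • (1 : M)) +
        (a • A₁ + A₀ + a ^ 2 • (1 : M)) := by
  module

open Matrix in
theorem Matrix.norm_sub_mul_sub_norm_le_of_det_eq_zero {𝕜 n : Type*} [NormedField 𝕜]
    [Fintype n] [DecidableEq n] (B C : Matrix n n 𝕜) (a b z : 𝕜)
    (hdet : (((z - a) * (z - b)) • (1 : Matrix n n 𝕜) + (z - a) • B + C).det = 0) :
    ‖z - a‖ * (‖z - b‖ - ‖B‖) ≤ ‖C‖ := by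
  obtain ⟨v, hv, hnull⟩ := Matrix.exists_mulVec_eq_zero_iff.mpr hdet
  have hfactor : (z - a) • ((z - b) • v + B *ᵥ v) = -(C *ᵥ v) := by
    rw [eq_neg_iff_add_eq_zero, ← hnull]
    simp only [Matrix.add_mulVec, Matrix.smul_mulVec, Matrix.one_mulVec, smul_add, smul_smul]
  have hlower : (‖z - b‖ - ‖B‖) * ‖v‖ ≤ ‖(z - b) • v + B *ᵥ v‖ := by
    have := norm_sub_norm_le ((z - b) • v) (-(B *ᵥ v))
    rw [sub_neg_eq_add, norm_neg, norm_smul] at this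
    linarith [Matrix.linfty_opNorm_mulVec B v]
  refine le_of_mul_le_mul_right ?_ (norm_pos_iff.mpr hv)
  calc ‖z - a‖ * (‖z - b‖ - ‖B‖) * ‖v‖
      ≤ ‖z - a‖ * ‖(z - b) • v + B *ᵥ v‖ := by
        rw [mul_assoc]; exact mul_le_mul_of_nonneg_left hlower (norm_nonneg _)
    _ = ‖C *ᵥ v‖ := by rw [← norm_smul, hfactor, norm_neg]
    _ ≤ ‖C‖ * ‖v‖ := Matrix.linfty_opNorm_mulVec C v

theorem min_sq_le_mul_add_of_mul_sub_le {x y β γ : ℝ} (hx : 0 ≤ x) (hy : 0 ≤ y) (hγ : 0 ≤ γ)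
    (h : x * (y - β) ≤ γ) : min x y ^ 2 ≤ β * min x y + γ := by
  set d := min x y
  have hd : 0 ≤ d := le_min hx hy
  rcases le_or_gt d β with hdβ | hβd
  · nlinarith
  · have hdx : d ≤ x := min_le_left x y
    have hdy : d ≤ y := min_le_right x y
    nlinarith [mul_le_mul hdx (sub_le_sub_right hdy β) (sub_pos.mpr hβd).le hx]

theorem le_of_sq_le_mul_add_of_sq_eq {d ρ β γ : ℝ} (hγ : 0 ≤ γ) (hρ : 0 < ρ)
    (hd : d ^ 2 ≤ β * d + γ) (hroot : ρ ^ 2 = β * ρ + γ) : d ≤ ρ := by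
  by_contra! hρd
  have hsum : d + ρ ≤ β := by
    have : (d - ρ) * (d + ρ) ≤ (d - ρ) * β := by nlinarith
    exact le_of_mul_le_mul_left this (sub_pos.mpr hρd)
  nlinarith [mul_le_mul_of_nonneg_right hsum hρ.le]

/-- Specialization to a monic quadratic in the Newton basis `1, z - a,
`(z - a)(z - b)`: if `det (z² I + z A₁ + A₀) = 0` and
`d = min (|z - a|, |z - b|)`, then
`d² ≤ ‖A₁ + (a+b)I‖ d + ‖a A₁ + A₀ + a² I‖` (L∞ operator norm); in
particular the eigenvalue `z` lies within distance `ρ` of `a` or of `b`,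
for `ρ` the positive root of `x² = ‖A₁ + (a+b)I‖ x + ‖a A₁ + A₀ + a² I‖`. -/
theorem quadratic_newton_inclusion (m : ℕ)
    (A₀ A₁ : Matrix (Fin m) (Fin m) ℂ) (a b z : ℂ)
    (hz : (z ^ 2 • (1 : Matrix (Fin m) (Fin m) ℂ) + z • A₁ + A₀).det = 0)
    (d : ℝ) (hd : d = min (‖z - a‖) (‖z - b‖)) :
    d ^ 2 ≤ ‖A₁ + (a + b) • (1 : Matrix (Fin m) (Fin m) ℂ)‖ * d +
      ‖a • A₁ + A₀ + a ^ 2 • (1 : Matrix (Fin m) (Fin m) ℂ)‖ ∧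
    ∀ ρ : ℝ, 0 < ρ →
      ρ ^ 2 = ‖A₁ + (a + b) • (1 : Matrix (Fin m) (Fin m) ℂ)‖ * ρ +
        ‖a • A₁ + A₀ + a ^ 2 • (1 : Matrix (Fin m) (Fin m) ℂ)‖ →
      ‖z - a‖ ≤ ρ ∨ ‖z - b‖ ≤ ρ := by
  rw [sq_smul_one_add_smul_add_eq_newton A₀ A₁ a b z] at hz
  have hbound : d ^ 2 ≤ ‖A₁ + (a + b) • (1 : Matrix (Fin m) (Fin m) ℂ)‖ * d +
      ‖a • A₁ + A₀ + a ^ 2 • (1 : Matrix (Fin m) (Fin m) ℂ)‖ :=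
    hd ▸ min_sq_le_mul_add_of_mul_sub_le (norm_nonneg _) (norm_nonneg _) (norm_nonneg _)
      (Matrix.norm_sub_mul_sub_norm_le_of_det_eq_zero _ _ a b z hz)
  refine ⟨hbound, fun ρ hρ hroot => ?_⟩
  rw [← min_le_iff, ← hd]
  exact le_of_sq_le_mul_add_of_sq_eq (norm_nonneg _) hρ hbound hroot
end

section
/- Let A_0, A_1 be m×m complex matrices, let a, b, c be complex numbers with b ≠ c, set γ = (|a − b| + |a − c|)/|b − c|, and let z be a complex number with det(z²I + z A_1 + A_0) = 0. Set d = min(|z − a|, |z − b|, |z − c|). Then (d/γ)² ≤ ‖A_1 + (b + c)I‖ · (d/γ) + ‖a A_1 + A_0 + (a(b + c) − bc) I‖, where ‖·‖ denotes the L∞ operator norm on m×m complex matrices (the maximum absolute row-sum norm, i.e., the operator norm induced by the sup norm on ℂ^m). In particular, every eigenvalue of Iz² + A_1 z + A_0 lies within distance γρ of one of a, b, c, where ρ is the positive root of x² = ‖A_1 + (b + c)I‖ x + ‖a A_1 + A_0 + (a(b + c) − bc) I‖. -/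
attribute [local instance] Matrix.linftyOpNormedRing Matrix.linftyOpNormSMulClass

/-!
Write `z² I + z A₁ + A₀ = q₂(z) I + q₁(z) B + C` with `q₁(z) = z - a`, `q₂(z) = (z - b)(z - c)`.
A null vector of this singular matrix gives `|q₂(z)| ≤ |q₁(z)| ‖B‖ + ‖C‖`. The identity
`(z - a)(b - c) = (z - b)(a - c) - (z - c)(a - b)` yields the ratio bounds
`|q₁(z)| (d/γ) ≤ |q₂(z)|` and `(d/γ)² ≤ |q₂(z)|`; dividing by `|q₂(z)|` then gives
`(d/γ)² ≤ ‖B‖ (d/γ) + ‖C‖`, and comparing with the positive root `ρ` gives `d ≤ γρ`.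
-/

namespace Matrix

variable {n 𝕜 : Type*} [Fintype n] [DecidableEq n] [NormedField 𝕜]

theorem norm_le_linfty_opNorm_of_det_smul_one_add_eq_zero {μ : 𝕜} {A : Matrix n n 𝕜}
    (h : (μ • (1 : Matrix n n 𝕜) + A).det = 0) : ‖μ‖ ≤ ‖A‖ := by
  obtain ⟨v, hv, hAv⟩ := exists_mulVec_eq_zero_iff.mpr h
  rw [add_mulVec, smul_mulVec, one_mulVec, add_eq_zero_iff_neg_eq] at hAv
  have hμv : ‖μ‖ * ‖v‖ ≤ ‖A‖ * ‖v‖ := by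
    simpa only [← hAv, norm_neg, norm_smul] using linfty_opNorm_mulVec A v
  exact le_of_mul_le_mul_right hμv (norm_pos_iff.mpr hv)

end Matrix

theorem sq_smul_one_add_smul_add_eq {R A : Type*} [CommRing R] [Ring A] [Algebra R A]
    (A₀ A₁ : A) (a b c z : R) :
    z ^ 2 • (1 : A) + z • A₁ + A₀ = ((z - b) * (z - c)) • (1 : A) +
      ((z - a) • (A₁ + (b + c) • (1 : A)) +
        (a • A₁ + A₀ + (a * (b + c) - b * c) • (1 : A))) := by
  module

section NormedField

variable {𝕜 : Type*} [NormedField 𝕜]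

theorem one_le_norm_add_norm_div_norm {a b c : 𝕜} (hbc : b ≠ c) :
    1 ≤ (‖a - b‖ + ‖a - c‖) / ‖b - c‖ := by
  rw [one_le_div (norm_pos_iff.mpr (sub_ne_zero.mpr hbc)), add_comm]
  simpa only [sub_sub_sub_cancel_left] using norm_sub_le (a - c) (a - b)

theorem norm_sub_mul_div_le_norm_mul {a b c z : 𝕜} {d : ℝ} (hbc : b ≠ c) (hd : 0 ≤ d)
    (hdb : d ≤ ‖z - b‖) (hdc : d ≤ ‖z - c‖) :
    ‖z - a‖ * (d / ((‖a - b‖ + ‖a - c‖) / ‖b - c‖)) ≤ ‖(z - b) * (z - c)‖ := by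
  have hδ : 0 < ‖b - c‖ := norm_pos_iff.mpr (sub_ne_zero.mpr hbc)
  have hγ : 0 < (‖a - b‖ + ‖a - c‖) / ‖b - c‖ :=
    zero_lt_one.trans_le (one_le_norm_add_norm_div_norm hbc)
  have hsplit : ‖z - a‖ * ‖b - c‖ ≤ ‖z - b‖ * ‖a - c‖ + ‖z - c‖ * ‖a - b‖ := by
    simpa only [← norm_mul,
      show (z - a) * (b - c) = (z - b) * (a - c) - (z - c) * (a - b) by ring]
      using norm_sub_le ((z - b) * (a - c)) ((z - c) * (a - b))
  rw [mul_div_assoc', div_le_iff₀ hγ, mul_div_assoc', le_div_iff₀ hδ, norm_mul]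
  calc ‖z - a‖ * d * ‖b - c‖ = ‖z - a‖ * ‖b - c‖ * d := by ring
    _ ≤ (‖z - b‖ * ‖a - c‖ + ‖z - c‖ * ‖a - b‖) * d := by gcongr
    _ = ‖z - b‖ * ‖a - c‖ * d + ‖z - c‖ * ‖a - b‖ * d := by ring
    _ ≤ ‖z - b‖ * ‖a - c‖ * ‖z - c‖ + ‖z - c‖ * ‖a - b‖ * ‖z - b‖ := by gcongr
    _ = ‖z - b‖ * ‖z - c‖ * (‖a - b‖ + ‖a - c‖) := by ring

end NormedField

theorem sq_le_of_le_mul_add_of_mul_le {s t u₁ u₂ x : ℝ} (hs : 0 ≤ s) (ht : 0 ≤ t)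
    (hx : 0 ≤ x) (hu : u₂ ≤ u₁ * s + t) (h₁ : u₁ * x ≤ u₂) (h₀ : x ^ 2 ≤ u₂) :
    x ^ 2 ≤ s * x + t := by
  rcases (sq_nonneg x |>.trans h₀).eq_or_lt with hu₂ | hu₂
  · obtain rfl : x = 0 :=
      pow_eq_zero_iff two_ne_zero |>.mp (le_antisymm (hu₂ ▸ h₀) (sq_nonneg x))
    simpa using ht
  refine le_of_mul_le_mul_left ?_ hu₂
  calc u₂ * x ^ 2 ≤ (u₁ * s + t) * x ^ 2 := by gcongr
    _ = s * x * (u₁ * x) + t * x ^ 2 := by ring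
    _ ≤ s * x * u₂ + t * u₂ := by gcongr
    _ = u₂ * (s * x + t) := by ring

theorem le_of_sq_le_mul_add_of_sq_eq_mul_add {s t x ρ : ℝ} (ht : 0 ≤ t) (hρ : 0 < ρ)
    (hx : x ^ 2 ≤ s * x + t) (hρ_eq : ρ ^ 2 = s * ρ + t) : x ≤ ρ := by
  have hsρ : s ≤ ρ := by nlinarith
  by_contra! hρx
  nlinarith [mul_pos (sub_pos.2 hρx) (by linarith : 0 < x + ρ - s)]

/-- Specialization to a monic quadratic in the generalized basis `1, z - a,
`(z - b)(z - c)` with `b ≠ c` and `γ = (|a - b| + |a - c|)/|b - c|`: if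
`det (z² I + z A₁ + A₀) = 0` and `d = min (|z-a|, |z-b|, |z-c|)`, then
`(d/γ)² ≤ ‖A₁ + (b+c)I‖ (d/γ) + ‖a A₁ + A₀ + (a(b+c) - bc) I‖` (L∞ operator
norm); in particular `z` lies within distance `γρ` of one of `a, b, c`, for
`ρ` the positive root of
`x² = ‖A₁ + (b+c)I‖ x + ‖a A₁ + A₀ + (a(b+c) - bc) I‖`. -/
theorem quadratic_generalized_inclusion (m : ℕ)
    (A₀ A₁ : Matrix (Fin m) (Fin m) ℂ) (a b c z : ℂ) (hbc : b ≠ c)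
    (γ : ℝ)
    (hγ : γ = (‖a - b‖ + ‖a - c‖) / ‖b - c‖)
    (hz : (z ^ 2 • (1 : Matrix (Fin m) (Fin m) ℂ) + z • A₁ + A₀).det = 0)
    (d : ℝ)
    (hd : d = min (‖z - a‖)
      (min (‖z - b‖) (‖z - c‖))) :
    (d / γ) ^ 2 ≤ ‖A₁ + (b + c) • (1 : Matrix (Fin m) (Fin m) ℂ)‖ * (d / γ) +
      ‖a • A₁ + A₀ + (a * (b + c) - b * c) • (1 : Matrix (Fin m) (Fin m) ℂ)‖ ∧
    ∀ ρ : ℝ, 0 < ρ →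
      ρ ^ 2 = ‖A₁ + (b + c) • (1 : Matrix (Fin m) (Fin m) ℂ)‖ * ρ +
        ‖a • A₁ + A₀ + (a * (b + c) - b * c) • (1 : Matrix (Fin m) (Fin m) ℂ)‖ →
      ‖z - a‖ ≤ γ * ρ ∨ ‖z - b‖ ≤ γ * ρ ∨
        ‖z - c‖ ≤ γ * ρ := by
  have hγ₁ : 1 ≤ γ := hγ ▸ one_le_norm_add_norm_div_norm hbc
  have hd₀ : 0 ≤ d := hd ▸ by positivity
  have hdb : d ≤ ‖z - b‖ := hd ▸ (min_le_right _ _).trans (min_le_left _ _)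
  have hdc : d ≤ ‖z - c‖ := hd ▸ (min_le_right _ _).trans (min_le_right _ _)
  rw [sq_smul_one_add_smul_add_eq A₀ A₁ a b c z] at hz
  have hq₂ := (Matrix.norm_le_linfty_opNorm_of_det_smul_one_add_eq_zero hz).trans
    ((norm_add_le _ _).trans_eq (by rw [norm_smul]))
  have hq₁ : ‖z - a‖ * (d / γ) ≤ ‖(z - b) * (z - c)‖ :=
    hγ ▸ norm_sub_mul_div_le_norm_mul hbc hd₀ hdb hdc
  have hq₀ : (d / γ) ^ 2 ≤ ‖(z - b) * (z - c)‖ := by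
    rw [norm_mul, sq]
    have hdγ := div_le_self hd₀ hγ₁
    exact mul_le_mul (hdγ.trans hdb) (hdγ.trans hdc) (by positivity) (norm_nonneg _)
  have hx := sq_le_of_le_mul_add_of_mul_le (norm_nonneg _) (norm_nonneg _) (by positivity)
    hq₂ hq₁ hq₀
  refine ⟨hx, fun ρ hρ hρ_eq => ?_⟩
  have hdρ : d ≤ γ * ρ := (div_le_iff₀' (by linarith)).mp
    (le_of_sq_le_mul_add_of_sq_eq_mul_add (norm_nonneg _) hρ hx hρ_eq)
  simpa only [hd, min_le_iff] using hdρ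
end
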